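/- arXiv:2206.01557 — 13 statements merged into one kernel-verified Lean document; each statement's English description precedes it below -/
import Mathlib

section
/- Let u : ℕ → Σ be an infinite word over a finite alphabet Σ. Then (a) the set Fac(u) of finite factors of u is well-quasi-ordered by the prefix order if and only if u is ultimately periodic (there exist p > 0 and N such that u(i) = u(i+p) for all i ≥ N); and (b) Fac(u) is well-quasi-ordered by the suffix order if and only if u is periodic (there exists p > 0 such that u(i) = u(i+p) for all i). -/
/-- The set of finite factors of the infinite word `u : ℕ → A`. -/
def FacN {A : Type*} (u : ℕ → A) : Set (List A) :=
  {v | ∃ i : ℕ, v = (List.range v.length).map fun k => u (i + k)}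

/-- A set `S` is well-quasi-ordered by the relation `r` if every infinite sequence of
elements of `S` contains an infinite increasing subsequence. -/
def WqoOn {A : Type*} (r : A → A → Prop) (S : Set A) : Prop :=
  ∀ f : ℕ → A, (∀ n, f n ∈ S) →
    ∃ g : ℕ → ℕ, StrictMono g ∧ ∀ m n, m < n → r (f (g m)) (f (g n))

/-!
If `Fac(u)` is well-quasi-ordered by prefixes, some length `n` carries no right special factor
(a factor `w` with two continuations `wa ≠ wb`): otherwise, along a prefix chain `wᵢaᵢ` of such
factors the siblings `wᵢbᵢ` would form an infinite antichain. Without right special factors of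
length `n`, two occurrences of the same length-`n` factor continue identically forever, so `u` is
ultimately periodic. Conversely, the factors of an ultimately periodic word lie on finitely many
prefix chains, one per starting position below preperiod plus period.

For suffixes, left special factors play the same role, but determinism now propagates backwards,
down to position `0`, which makes `u` purely periodic; the factors of a periodic word lie on
finitely many suffix chains, one per residue of their end position.
-/

section Wqo

variable {α ι : Type*}

theorem wqoOn_of_forall_mem_exists_chain [Finite ι] {r : α → α → Prop} {S : Set α}
    (c : ι → ℕ → α) (hc : ∀ i ⦃a b : ℕ⦄, a ≤ b → r (c i a) (c i b))
    (hS : ∀ x ∈ S, ∃ i n, c i n = x) : WqoOn r S := by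
  intro f hf
  choose i n hin using fun k => hS (f k) (hf k)
  obtain ⟨g, hg⟩ := (Finite.wellQuasiOrdered (α := ι) (· = ·)).exists_monotone_subseq i
  obtain ⟨g', hg'⟩ := (wellQuasiOrdered_le (α := ℕ)).exists_monotone_subseq (n ∘ g)
  refine ⟨g ∘ g', g.strictMono.comp g'.strictMono, fun a b hab => ?_⟩
  simp only [Function.comp_apply, ← hin, hg _ _ (g'.monotone hab.le)]
  exact hc _ (hg' _ _ hab.le)

theorem not_wqoOn_prefix_of_forall_exists_siblings {S : Set (List α)}
    (h : ∀ q, ∃ w : List α, w.length = q ∧ ∃ a b, a ≠ b ∧ w ++ [a] ∈ S ∧ w ++ [b] ∈ S) :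
    ¬ WqoOn (· <+: ·) S := by
  intro hS
  choose w hw a b hab ha hb using h
  obtain ⟨g, hg, hga⟩ := hS (fun q => w q ++ [a q]) ha
  obtain ⟨g', hg', hgb⟩ := hS (fun m => w (g m) ++ [b (g m)]) fun m => hb _
  set m := g (g' 0)
  set n := g (g' 1)
  have hmn : m < n := hg (hg' zero_lt_one)
  have prefix_of_prefix_concat : ∀ {c c' : α}, w m ++ [c] <+: w n ++ [c'] → w m ++ [c] <+: w n :=
    fun h => (List.prefix_concat_iff.mp h).resolve_left fun he => by
      have := congrArg List.length he
      simp only [List.length_append, hw, List.length_singleton] at this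
      omega
  -- `w m ++ [a m]` and `w m ++ [b m]` are both prefixes of `w n` of the same length
  have hab' : w m ++ [a m] = w m ++ [b m] :=
    (List.prefix_of_prefix_length_le (prefix_of_prefix_concat (hga _ _ (hg' zero_lt_one)))
      (prefix_of_prefix_concat (hgb 0 1 zero_lt_one)) (by simp)).eq_of_length (by simp)
  exact hab m (by simpa using hab')

theorem WqoOn.reverse_preimage {S : Set (List α)} (h : WqoOn (· <:+ ·) S) :
    WqoOn (· <+: ·) (List.reverse ⁻¹' S) := fun f hf => by
  obtain ⟨g, hg, hchain⟩ := h (List.reverse ∘ f) hf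
  exact ⟨g, hg, fun m n hmn => List.reverse_suffix.mp (hchain m n hmn)⟩

theorem not_wqoOn_suffix_of_forall_exists_siblings {S : Set (List α)}
    (h : ∀ q, ∃ w : List α, w.length = q ∧ ∃ a b, a ≠ b ∧ a :: w ∈ S ∧ b :: w ∈ S) :
    ¬ WqoOn (· <:+ ·) S := fun hS =>
  not_wqoOn_prefix_of_forall_exists_siblings (fun q => by
    obtain ⟨w, hw, a, b, hab, ha, hb⟩ := h q
    exact ⟨w.reverse, by simp [hw], a, b, hab, by simpa using ha, by simpa using hb⟩)
    hS.reverse_preimage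

end Wqo

namespace InfiniteWord

variable {A : Type*}

def factor (u : ℕ → A) (i n : ℕ) : List A := (List.range n).map fun k => u (i + k)

def NoRightSpecial (u : ℕ → A) (n : ℕ) : Prop :=
  ∀ i j, factor u i n = factor u j n → u (i + n) = u (j + n)

def NoLeftSpecial (u : ℕ → A) (n : ℕ) : Prop :=
  ∀ i j, factor u (i + 1) n = factor u (j + 1) n → u i = u j

variable {u : ℕ → A}

@[simp] theorem length_factor (i n : ℕ) : (factor u i n).length = n := by simp [factor]

theorem mem_facN_iff {v : List A} : v ∈ FacN u ↔ ∃ i n, factor u i n = v :=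
  ⟨fun ⟨i, h⟩ => ⟨i, _, h.symm⟩, fun ⟨i, n, h⟩ => ⟨i, by subst h; simp [factor]⟩⟩

theorem factor_mem_facN (i n : ℕ) : factor u i n ∈ FacN u := mem_facN_iff.mpr ⟨i, n, rfl⟩

theorem factor_eq_factor_iff {i j n : ℕ} :
    factor u i n = factor u j n ↔ ∀ k < n, u (i + k) = u (j + k) := by
  simp [factor, List.map_inj_left]

theorem factor_eq_factor_of_le {i j m n : ℕ} (hmn : m ≤ n) (h : factor u i n = factor u j n) :
    factor u i m = factor u j m :=
  factor_eq_factor_iff.mpr fun k hk => factor_eq_factor_iff.mp h k (by omega)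

theorem factor_add (i m n : ℕ) : factor u i (m + n) = factor u i m ++ factor u (i + m) n := by
  simp [factor, List.range_add, add_assoc]

theorem factor_succ (i n : ℕ) : factor u i (n + 1) = factor u i n ++ [u (i + n)] := by
  simp [factor, List.range_succ]

theorem factor_succ' (i n : ℕ) : factor u i (n + 1) = u i :: factor u (i + 1) n := by
  rw [add_comm n, factor_add]
  simp [factor]

theorem factor_prefix_factor (i : ℕ) {m n : ℕ} (h : m ≤ n) : factor u i m <+: factor u i n := by
  obtain ⟨d, rfl⟩ := Nat.exists_eq_add_of_le h
  rw [factor_add]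
  exact List.prefix_append _ _

theorem NoRightSpecial.factor_add_eq {n : ℕ} (h : NoRightSpecial u n) {i j : ℕ}
    (hij : factor u i n = factor u j n) (d : ℕ) : factor u i (n + d) = factor u j (n + d) := by
  induction d generalizing i j with
  | zero => exact hij
  | succ d ih =>
    have hsucc : u i :: factor u (i + 1) n = u j :: factor u (j + 1) n := by
      rw [← factor_succ', ← factor_succ', factor_succ, factor_succ, hij, h i j hij]
    obtain ⟨hu, hnext⟩ := List.cons.inj hsucc
    rw [← add_assoc, factor_succ', factor_succ', hu, ih hnext]

theorem NoLeftSpecial.factor_add_eq {n : ℕ} (h : NoLeftSpecial u n) {i j : ℕ} (d : ℕ)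
    (hij : factor u (i + d) n = factor u (j + d) n) : factor u i (d + n) = factor u j (d + n) := by
  induction d generalizing i j with
  | zero => simpa using hij
  | succ d ih =>
    have hnext := ih (i := i + 1) (j := j + 1) (by convert hij using 2 <;> omega)
    rw [add_right_comm, factor_succ', factor_succ', hnext,
      h i j (factor_eq_factor_of_le (by omega) hnext)]

theorem exists_noRightSpecial_of_wqoOn_prefix (h : WqoOn (· <+: ·) (FacN u)) :
    ∃ n, NoRightSpecial u n := by
  by_contra! hrs
  refine not_wqoOn_prefix_of_forall_exists_siblings (fun n => ?_) h
  obtain ⟨i, j, hij, hne⟩ : ∃ i j, factor u i n = factor u j n ∧ u (i + n) ≠ u (j + n) := by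
    simpa [NoRightSpecial] using hrs n
  refine ⟨factor u i n, length_factor i n, _, _, hne, ?_, ?_⟩
  · rw [← factor_succ]; exact factor_mem_facN _ _
  · rw [hij, ← factor_succ]; exact factor_mem_facN _ _

theorem exists_noLeftSpecial_of_wqoOn_suffix (h : WqoOn (· <:+ ·) (FacN u)) :
    ∃ n, NoLeftSpecial u n := by
  by_contra! hls
  refine not_wqoOn_suffix_of_forall_exists_siblings (fun n => ?_) h
  obtain ⟨i, j, hij, hne⟩ : ∃ i j, factor u (i + 1) n = factor u (j + 1) n ∧ u i ≠ u j := by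
    simpa [NoLeftSpecial] using hls n
  refine ⟨factor u (i + 1) n, length_factor _ n, _, _, hne, ?_, ?_⟩
  · rw [← factor_succ']; exact factor_mem_facN _ _
  · rw [hij, ← factor_succ']; exact factor_mem_facN _ _

theorem exists_eventually_periodic_of_noRightSpecial [Finite A] {n : ℕ}
    (h : NoRightSpecial u n) : ∃ p > 0, ∃ N, ∀ i ≥ N, u (i + p) = u i := by
  obtain ⟨i, j, hij, hw⟩ := Set.Finite.exists_lt_map_eq_of_forall_mem
    (f := fun i => factor u i n) (fun i => length_factor i n) (List.finite_length_eq A n)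
  refine ⟨j - i, by omega, i, fun m hm => ?_⟩
  have := factor_eq_factor_iff.mp (h.factor_add_eq hw (m - i + 1)) (m - i) (by omega)
  convert this.symm using 2 <;> omega

theorem exists_infinite_setOf_factor_eq [Finite A] (u : ℕ → A) (n : ℕ) :
    ∃ w, {k | factor u k n = w}.Infinite := by
  have : Finite {l : List A // l.length = n} := (List.finite_length_eq A n).to_subtype
  obtain ⟨w, hw⟩ := Finite.exists_infinite_fiber
    fun k => (⟨factor u k n, length_factor k n⟩ : {l : List A // l.length = n})
  refine ⟨w.1, ?_⟩
  convert Set.infinite_coe_iff.mp hw using 1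
  ext k
  simp [Subtype.ext_iff]

theorem exists_periodic_of_noLeftSpecial [Finite A] {n : ℕ} (h : NoLeftSpecial u n) :
    ∃ p > 0, Function.Periodic u p := by
  obtain ⟨w, hw⟩ := exists_infinite_setOf_factor_eq u n
  obtain ⟨i, hi⟩ := hw.nonempty
  obtain ⟨j, hj, hij⟩ := hw.exists_gt i
  refine ⟨j - i, by omega, fun m => ?_⟩
  obtain ⟨k, hk, hjk⟩ := hw.exists_gt (m + j)
  -- the occurrence at `k` is preceded by one at `k - (j - i)`, as the one at `j` is by `i`
  have hk' : factor u (k - (j - i)) n = factor u k n := by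
    have := h.factor_add_eq (i := i) (j := k - (j - i)) (j - i) <| by
      rw [show i + (j - i) = j by omega, show k - (j - i) + (j - i) = k by omega]
      exact hj.trans hk.symm
    rw [← factor_eq_factor_of_le (by omega) this]
    exact hi.trans hk.symm
  have := h.factor_add_eq (i := 0) (j := j - i) (k - (j - i)) <| by
    rwa [show j - i + (k - (j - i)) = k by omega, zero_add]
  rw [add_comm]
  simpa using (factor_eq_factor_iff.mp this m (by omega)).symm

theorem exists_lt_forall_eq_of_eventually_periodic {p N : ℕ} (hp : 0 < p)
    (hper : ∀ i ≥ N, u (i + p) = u i) (i : ℕ) : ∃ j < N + p, ∀ k, u (i + k) = u (j + k) := by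
  induction i using Nat.strong_induction_on with
  | _ i ih =>
    by_cases hi : i < N + p
    · exact ⟨i, hi, fun _ => rfl⟩
    · obtain ⟨j, hj, hij⟩ := ih (i - p) (by omega)
      refine ⟨j, hj, fun k => ?_⟩
      calc u (i + k) = u (i - p + k + p) := by congr 1; omega
        _ = u (i - p + k) := hper _ (by omega)
        _ = u (j + k) := hij k

theorem wqoOn_prefix_facN_of_eventually_periodic {p N : ℕ} (hp : 0 < p)
    (hper : ∀ i ≥ N, u (i + p) = u i) : WqoOn (· <+: ·) (FacN u) := by
  refine wqoOn_of_forall_mem_exists_chain (fun j : Fin (N + p) => factor u j)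
    (fun j _ _ hab => factor_prefix_factor j hab) fun v hv => ?_
  obtain ⟨i, n, rfl⟩ := mem_facN_iff.mp hv
  obtain ⟨j, hj, hij⟩ := exists_lt_forall_eq_of_eventually_periodic hp hper i
  exact ⟨⟨j, hj⟩, n, factor_eq_factor_iff.mpr fun k _ => (hij k).symm⟩

theorem factor_eq_factor_of_modEq {p : ℕ} (hper : Function.Periodic u p) {i j : ℕ}
    (h : i ≡ j [MOD p]) (n : ℕ) : factor u i n = factor u j n :=
  factor_eq_factor_iff.mpr fun k _ => by
    rw [← hper.map_mod_nat, ← hper.map_mod_nat (j + k), h.add_right k]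

theorem wqoOn_suffix_facN_of_periodic {p : ℕ} (hp : 0 < p) (hper : Function.Periodic u p) :
    WqoOn (· <:+ ·) (FacN u) := by
  obtain ⟨q, rfl⟩ : ∃ q, p = q + 1 := ⟨p - 1, by omega⟩
  -- chain `r`: the factors ending at a position `≡ r [MOD q + 1]`; the one of length `n` ends at
  -- `r + (q + 1) * n`
  refine wqoOn_of_forall_mem_exists_chain (fun r : Fin (q + 1) => fun n => factor u (r + q * n) n)
    (fun r a b hab => ?_) fun v hv => ?_
  · obtain ⟨d, rfl⟩ := Nat.exists_eq_add_of_le hab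
    have hshift : factor u (r + q * (d + a) + d) a = factor u (r + q * a) a := by
      refine factor_eq_factor_of_modEq hper ?_ a
      rw [show r + q * (d + a) + d = r + q * a + (q + 1) * d by ring]
      exact Nat.add_mul_mod_self_left _ _ _
    rw [add_comm a d, factor_add, hshift]
    exact List.suffix_append _ _
  · obtain ⟨i, n, rfl⟩ := mem_facN_iff.mp hv
    refine ⟨⟨(i + n) % (q + 1), Nat.mod_lt _ hp⟩, n, factor_eq_factor_of_modEq hper ?_ n⟩
    calc (i + n) % (q + 1) + q * n ≡ i + n + q * n [MOD q + 1] := (Nat.mod_modEq _ _).add_right _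
      _ = i + (q + 1) * n := by ring
      _ ≡ i [MOD q + 1] := Nat.add_mul_mod_self_left _ _ _

end InfiniteWord

open InfiniteWord

theorem stmt0 {A : Type*} [Finite A] (u : ℕ → A) :
    (WqoOn (· <+: ·) (FacN u) ↔ ∃ p > 0, ∃ N : ℕ, ∀ i ≥ N, u (i + p) = u i) ∧
    (WqoOn (· <:+ ·) (FacN u) ↔ ∃ p > 0, ∀ i : ℕ, u (i + p) = u i) := by
  refine ⟨⟨fun h => ?_, fun ⟨p, hp, N, hper⟩ => wqoOn_prefix_facN_of_eventually_periodic hp hper⟩,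
    ⟨fun h => ?_, fun ⟨p, hp, hper⟩ => wqoOn_suffix_facN_of_periodic hp hper⟩⟩
  · obtain ⟨n, hn⟩ := exists_noRightSpecial_of_wqoOn_prefix h
    exact exists_eventually_periodic_of_noRightSpecial hn
  · obtain ⟨n, hn⟩ := exists_noLeftSpecial_of_wqoOn_suffix h
    exact exists_periodic_of_noLeftSpecial hn
end

section
/- Let μ : ℕ → Σ be an infinite periodic word over a finite alphabet with period p > 0 (i.e., μ(i) = μ(i+p) for all i). Then every bound of the factor-closed class Fac(μ) of finite words has length at most p. -/
/-- A bound of a factor-closed class `C` of finite words: a word not in `C` all of whose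
proper factors belong to `C`. -/
def IsBound {A : Type*} (C : Set (List A)) (v : List A) : Prop :=
  v ∉ C ∧ ∀ w : List A, w <:+: v → w ≠ v → w ∈ C

section Window

variable {A : Type*} (μ : ℕ → A)

def window (i L : ℕ) : List A :=
  (List.range L).map fun k => μ (i + k)

@[simp]
lemma length_window (i L : ℕ) : (window μ i L).length = L := by
  simp [window]

lemma mem_facN_iff {v : List A} : v ∈ FacN μ ↔ ∃ i, v = window μ i v.length := Iff.rfl

lemma window_mem_facN (i L : ℕ) : window μ i L ∈ FacN μ :=
  ⟨i, by rw [length_window]; rfl⟩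

lemma window_succ_right (i L : ℕ) : window μ i (L + 1) = window μ i L ++ [μ (i + L)] := by
  simp [window, List.range_succ]

lemma window_succ_left (i L : ℕ) : window μ i (L + 1) = μ i :: window μ (i + 1) L := by
  simp [window, List.range_succ_eq_map, Nat.add_assoc, Nat.add_comm 1]

lemma window_eq_window_iff {i j L : ℕ} :
    window μ i L = window μ j L ↔ ∀ t < L, μ (i + t) = μ (j + t) := by
  simp [window, List.map_inj_left]

variable {μ} {p : ℕ} (hper : ∀ i, μ (i + p) = μ i)
include hper

lemma window_perm_window_of_periodic (i j : ℕ) : (window μ i p).Perm (window μ j p) := by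
  suffices h : ∀ i, (window μ i p).Perm (window μ 0 p) from (h i).trans (h j).symm
  intro i
  induction i with
  | zero => rfl
  | succ i ih =>
    refine List.Perm.trans ?_ ih
    obtain _ | L := p
    · rfl
    · rw [window_succ_right, window_succ_left, Nat.add_assoc, Nat.add_comm 1 L, hper]
      exact List.perm_append_singleton _ _

lemma apply_eq_of_window_pred_eq (hp : 0 < p) {i j : ℕ}
    (h : window μ i (p - 1) = window μ j (p - 1)) : μ (i + (p - 1)) = μ (j + (p - 1)) := by
  have hperm := window_perm_window_of_periodic hper i j
  rw [← Nat.sub_add_cancel hp, window_succ_right, window_succ_right, h,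
    List.perm_append_left_iff] at hperm
  exact List.singleton_perm_singleton.mp hperm

lemma apply_add_eq_of_window_pred_eq (hp : 0 < p) {i j : ℕ}
    (h : window μ i (p - 1) = window μ j (p - 1)) (k : ℕ) : μ (i + k) = μ (j + k) := by
  rw [window_eq_window_iff] at h
  induction k using Nat.strong_induction_on with
  | _ k ih =>
    by_cases hk : k < p - 1
    · exact h k hk
    -- the letter at `k` closes the window of length `p` starting at `k - (p - 1)`
    · obtain ⟨c, rfl⟩ : ∃ c, k = c + (p - 1) := ⟨k - (p - 1), by omega⟩
      have hwin : window μ (i + c) (p - 1) = window μ (j + c) (p - 1) :=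
        (window_eq_window_iff μ).mpr fun t ht => by
          simpa only [Nat.add_assoc] using ih (c + t) (by omega)
      simpa only [Nat.add_assoc] using apply_eq_of_window_pred_eq hper hp hwin

end Window

lemma mem_facN_of_dropLast_of_tail {A : Type*} {μ : ℕ → A} {p : ℕ} (hp : 0 < p)
    (hper : ∀ i, μ (i + p) = μ i) {v : List A} (hlen : p < v.length)
    (hinit : v.dropLast ∈ FacN μ) (htail : v.tail ∈ FacN μ) : v ∈ FacN μ := by
  obtain ⟨xs, x, rfl⟩ : ∃ xs x, v = xs ++ [x] :=
    (List.eq_nil_or_concat' v).resolve_left (by rintro rfl; simp at hlen)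
  rw [List.length_append, List.length_singleton] at hlen
  obtain ⟨L, hL⟩ : ∃ L, xs.length = L + 1 := ⟨xs.length - 1, by omega⟩
  have hpL : p - 1 ≤ L := by omega
  obtain ⟨i, hi⟩ := (mem_facN_iff μ).mp (List.dropLast_concat ▸ hinit)
  obtain ⟨j, hj⟩ := (mem_facN_iff μ).mp htail
  rw [hL, window_succ_left] at hi
  subst hi
  rw [List.tail_append_of_ne_nil (List.cons_ne_nil _ _), List.tail_cons, List.length_append,
    length_window, List.length_singleton, window_succ_right] at hj
  obtain ⟨hoverlap, hlast⟩ := List.append_inj' hj rfl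
  have hagree : window μ (i + 1) (p - 1) = window μ j (p - 1) :=
    (window_eq_window_iff μ).mpr fun t ht =>
      (window_eq_window_iff μ).mp hoverlap t (by omega)
  have hx : x = μ (i + 1 + L) := by
    rw [List.singleton_inj.mp hlast, apply_add_eq_of_window_pred_eq hper hp hagree L]
  rw [hx, ← window_succ_left, Nat.add_assoc, Nat.add_comm 1 L, ← window_succ_right]
  exact window_mem_facN μ i (L + 2)

theorem stmt1_general {A : Type*} (μ : ℕ → A) (p : ℕ) (hp : 0 < p)
    (hper : ∀ i : ℕ, μ (i + p) = μ i) (v : List A) (hv : IsBound (FacN μ) v) :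
    v.length ≤ p := by
  by_contra! hlen
  obtain ⟨hnot, hproper⟩ := hv
  have hshorter : ∀ w : List A, w.length < v.length → w ≠ v := fun w hw =>
    ne_of_apply_ne List.length hw.ne
  refine hnot (mem_facN_of_dropLast_of_tail hp hper hlen ?_ ?_)
  · exact hproper _ (List.dropLast_prefix v).isInfix (hshorter _ (by rw [List.length_dropLast]; omega))
  · exact hproper _ (List.tail_suffix v).isInfix (hshorter _ (by rw [List.length_tail]; omega))

theorem stmt1 {A : Type*} [Finite A] (μ : ℕ → A) (p : ℕ) (hp : 0 < p)
    (hper : ∀ i : ℕ, μ (i + p) = μ i) (v : List A) (hv : IsBound (FacN μ) v) :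
    v.length ≤ p :=
  stmt1_general μ p hp hper v hv
end

section
/- Let μ : ℕ → {0,1} be a nonempty 0-1 word. The following are equivalent: (i) Fac(μ) is inexhaustible; (ii) μ is recurrent; (iii) there exists a two-sided word ν : ℤ → {0,1} such that Fac(μ) = Fac(ν) = Fac(ν restricted to {0,1,2,…}) = Fac(ν restricted to {…,−2,−1,0}). -/
/-- The word `v` occurs in `μ` at position `i`. -/
def OccN {A : Type*} (μ : ℕ → A) (v : List A) (i : ℕ) : Prop :=
  v = (List.range v.length).map fun k => μ (i + k)

/-- `μ` is recurrent: every finite factor occurs at infinitely many positions. -/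
def RecurrentN {A : Type*} (μ : ℕ → A) : Prop :=
  ∀ v ∈ FacN μ, ∀ N : ℕ, ∃ i ≥ N, OccN μ v i

/-- A set of finite words, not reduced to the empty word, is inexhaustible if for every
`v ∈ C` there exists a word `w` such that `v ++ w ++ v ∈ C`. -/
def Inexh {A : Type*} (C : Set (List A)) : Prop :=
  C.Nonempty ∧ C ≠ {[]} ∧ ∀ v ∈ C, ∃ w : List A, v ++ w ++ v ∈ C

/-- The set of finite factors of the two-sided word `ν : ℤ → A` whose occurrences lie
entirely inside the set of positions `S`. -/
def FacZOn {A : Type*} (ν : ℤ → A) (S : Set ℤ) : Set (List A) :=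
  {v | ∃ i : ℤ, (∀ k : ℕ, k < v.length → i + (k : ℤ) ∈ S) ∧
      v = (List.range v.length).map fun k => ν (i + (k : ℤ))}

variable {A : Type*}

theorem map_range_eq_map_range_iff {f g : ℕ → A} {n : ℕ} :
    (List.range n).map f = (List.range n).map g ↔ ∀ k < n, f k = g k := by
  simp only [List.map_inj_left, List.mem_range]

section OneSided

variable {μ : ℕ → A}

def factorAt (μ : ℕ → A) (i n : ℕ) : List A := (List.range n).map fun k => μ (i + k)

theorem occN_factorAt (μ : ℕ → A) (i n : ℕ) : OccN μ (factorAt μ i n) i := by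
  simp [OccN, factorAt]

theorem occN_factorAt_zero_iff {L q : ℕ} :
    OccN μ (factorAt μ 0 L) q ↔ ∀ k < L, μ (q + k) = μ k := by
  simp only [OccN, factorAt, List.length_map, List.length_range, zero_add,
    map_range_eq_map_range_iff, eq_comm]

theorem occN_append_iff {u v : List A} {i : ℕ} :
    OccN μ (u ++ v) i ↔ OccN μ u i ∧ OccN μ v (i + u.length) := by
  simp only [OccN, List.length_append, List.range_add, List.map_append, List.map_map,
    Function.comp_def, add_assoc]
  exact ⟨fun h => List.append_inj h (by simp), fun ⟨hu, hv⟩ => by rw [← hu, ← hv]⟩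

theorem recurrentN_iff_forall_prefix :
    RecurrentN μ ↔ ∀ L N : ℕ, ∃ q ≥ N, ∀ k < L, μ (q + k) = μ k := by
  constructor
  · intro h L N
    obtain ⟨q, hqN, hq⟩ := h _ ⟨0, occN_factorAt μ 0 L⟩ N
    exact ⟨q, hqN, occN_factorAt_zero_iff.1 hq⟩
  · rintro h v ⟨i, hv⟩ N
    obtain ⟨q, hqN, hq⟩ := h (i + v.length) N
    refine ⟨q + i, by omega, hv.trans (map_range_eq_map_range_iff.2 fun k hk => ?_)⟩
    rw [add_assoc, hq (i + k) (by omega)]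

theorem RecurrentN.inexh_facN (h : RecurrentN μ) : Inexh (FacN μ) := by
  refine ⟨⟨[], 0, rfl⟩, fun hC => ?_, fun v ⟨i, hv⟩ => ?_⟩
  · have h1 : factorAt μ 0 1 ∈ ({[]} : Set (List A)) := hC ▸ ⟨0, occN_factorAt μ 0 1⟩
    simp [factorAt] at h1
  · obtain ⟨j, hj, hvj⟩ := h v ⟨i, hv⟩ (i + v.length)
    let w := factorAt μ (i + v.length) (j - (i + v.length))
    have hwj : i + (v ++ w).length = j := by simp [w, factorAt]; omega
    exact ⟨w, i, occN_append_iff.2 ⟨occN_append_iff.2 ⟨hv, occN_factorAt _ _ _⟩, hwj ▸ hvj⟩⟩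

theorem recurrentN_of_inexh_facN (h : Inexh (FacN μ)) : RecurrentN μ := by
  refine recurrentN_iff_forall_prefix.2 fun L N => ?_
  let x := factorAt μ 0 (L + N)
  obtain ⟨w, j, hj⟩ := h.2.2 x ⟨0, occN_factorAt μ 0 _⟩
  have hx : OccN μ x (j + (x ++ w).length) := (occN_append_iff.1 hj).2
  exact ⟨j + (x ++ w).length, by simp [x, factorAt]; omega,
    fun k hk => occN_factorAt_zero_iff.1 hx k (by omega)⟩

theorem inexh_facN_iff_recurrentN : Inexh (FacN μ) ↔ RecurrentN μ :=
  ⟨recurrentN_of_inexh_facN, RecurrentN.inexh_facN⟩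

end OneSided

section TwoSided

variable {μ : ℕ → A}

/-- In `FacZOn` the cast `(k : ℤ)` is elaborated as a monadic lift of `List.range v.length` to
`List ℤ`. -/
theorem mem_facZOn_iff {ν : ℤ → A} {S : Set ℤ} {v : List A} :
    v ∈ FacZOn ν S ↔ ∃ i : ℤ, (∀ k : ℕ, k < v.length → i + (k : ℤ) ∈ S) ∧
      v = (List.range v.length).map fun k : ℕ => ν (i + k) := by
  simp only [FacZOn, Set.mem_ofPred_eq, List.bind_eq_flatMap, List.pure_def,
    ← List.map_eq_flatMap, List.map_map, Function.comp_def]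

theorem facZOn_mono {ν : ℤ → A} {S T : Set ℤ} (hST : S ⊆ T) : FacZOn ν S ⊆ FacZOn ν T :=
  fun _ ⟨i, hS, hv⟩ => ⟨i, fun k hk => hST (hS k hk), hv⟩

theorem recurrentN_of_facN_eq_facZOn_nonpos {ν : ℤ → A}
    (h : FacN μ = FacZOn ν {z | z ≤ 0}) : RecurrentN μ := by
  intro v hv N
  obtain rfl | hne := eq_or_ne v []
  · exact ⟨N, le_rfl, rfl⟩
  obtain ⟨z, hz, hv⟩ := mem_facZOn_iff.1 (h ▸ hv)
  have hlast := hz (v.length - 1) (by have := List.length_pos_of_ne_nil hne; omega)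
  obtain ⟨q, hq⟩ : (List.range (N + v.length)).map (fun k : ℕ => ν (z - N + k)) ∈ FacN μ := by
    refine h ▸ mem_facZOn_iff.2 ⟨z - N, fun k hk => ?_, by simp⟩
    simp only [Set.mem_ofPred_eq, List.length_map, List.length_range] at hlast hk ⊢
    omega
  rw [List.length_map, List.length_range, map_range_eq_map_range_iff] at hq
  refine ⟨q + N, by omega, hv.trans (map_range_eq_map_range_iff.2 fun k hk => ?_)⟩
  rw [add_assoc, ← hq (N + k) (by omega)]
  congr 1; push_cast; ring

/-- The `n`-th window is the prefix `μ[0, m n)`, placed with its letter `c n` at position `0`. -/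
structure NestedWindows (μ : ℕ → A) (c m : ℕ → ℕ) : Prop where
  origin_lt_length_zero : c 0 < m 0
  origin_lt_succ : ∀ n, c n < c (n + 1)
  right_lt_succ : ∀ n, m n + c (n + 1) < m (n + 1) + c n
  agree_succ : ∀ n, ∀ k < m n, μ (c (n + 1) - c n + k) = μ k
  exists_copy_nonneg : ∀ n, ∃ p, c (n + 1) ≤ p ∧ p + m n ≤ m (n + 1) ∧ ∀ k < m n, μ (p + k) = μ k

/-- Position `z` already lies in window `|z|`. -/
def windowLimit (μ : ℕ → A) (c : ℕ → ℕ) (z : ℤ) : A := μ (c z.natAbs + z).toNat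

namespace NestedWindows

variable {c m : ℕ → ℕ}

theorem le_origin (h : NestedWindows μ c m) (n : ℕ) : n ≤ c n := by
  induction n with
  | zero => omega
  | succ n ih => have := h.origin_lt_succ n; omega

theorem origin_add_lt (h : NestedWindows μ c m) (n : ℕ) : c n + n < m n := by
  induction n with
  | zero => simpa using h.origin_lt_length_zero
  | succ n ih => have := h.right_lt_succ n; omega

theorem origin_mono (h : NestedWindows μ c m) : Monotone c :=
  monotone_nat_of_le_succ fun n => (h.origin_lt_succ n).le

theorem right_mono (h : NestedWindows μ c m) : Monotone fun n => (m n : ℤ) - c n :=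
  monotone_nat_of_le_succ fun n => by have := h.right_lt_succ n; omega

theorem agree (h : NestedWindows μ c m) {n n' : ℕ} (hn : n ≤ n') {z : ℤ}
    (h0 : 0 ≤ c n + z) (h1 : c n + z < m n) : μ (c n' + z).toNat = μ (c n + z).toNat := by
  induction n', hn using Nat.le_induction with
  | base => rfl
  | succ n' hn ih =>
    have hc := h.origin_mono hn
    have hr : (m n : ℤ) - c n ≤ m n' - c n' := h.right_mono hn
    have := h.origin_lt_succ n'
    rw [← ih, ← h.agree_succ n' (c n' + z).toNat (by omega)]
    congr 1; omega

theorem windowLimit_eq (h : NestedWindows μ c m) {n : ℕ} {z : ℤ} (h0 : 0 ≤ c n + z)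
    (h1 : c n + z < m n) : windowLimit μ c z = μ (c n + z).toNat := by
  have := h.le_origin z.natAbs
  have := h.origin_add_lt z.natAbs
  rcases le_total n z.natAbs with hn | hn
  · exact h.agree hn h0 h1
  · exact (h.agree hn (by omega) (by omega)).symm

theorem facZOn_subset_facN (h : NestedWindows μ c m) (S : Set ℤ) :
    FacZOn (windowLimit μ c) S ⊆ FacN μ := by
  intro v hv
  obtain ⟨z, -, hv⟩ := mem_facZOn_iff.1 hv
  set n := z.natAbs + v.length
  have := h.le_origin n
  have := h.origin_add_lt n
  refine ⟨(c n + z).toNat, hv.trans (map_range_eq_map_range_iff.2 fun k hk => ?_)⟩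
  rw [h.windowLimit_eq (n := n) (by omega) (by omega)]
  congr 1; omega

theorem facN_subset_facZOn_nonpos (h : NestedWindows μ c m) :
    FacN μ ⊆ FacZOn (windowLimit μ c) {z | z ≤ 0} := by
  rintro v ⟨i, hv⟩
  set n := i + v.length
  have := h.le_origin n
  have := h.origin_add_lt n
  refine mem_facZOn_iff.2 ⟨i - c n, fun k hk => ?_, hv.trans (map_range_eq_map_range_iff.2 fun k hk => ?_)⟩
  · simp only [Set.mem_ofPred_eq]; omega
  · rw [h.windowLimit_eq (n := n) (by omega) (by omega)]
    congr 1; omega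

theorem facN_subset_facZOn_nonneg (h : NestedWindows μ c m) :
    FacN μ ⊆ FacZOn (windowLimit μ c) {z | 0 ≤ z} := by
  rintro v ⟨i, hv⟩
  set n := i + v.length
  obtain ⟨p, hcp, hpm, hp⟩ := h.exists_copy_nonneg n
  have := h.origin_add_lt n
  refine mem_facZOn_iff.2 ⟨p - c (n + 1) + i, fun k hk => ?_,
    hv.trans (map_range_eq_map_range_iff.2 fun k hk => ?_)⟩
  · simp only [Set.mem_ofPred_eq]; omega
  · rw [h.windowLimit_eq (n := n + 1) (by omega) (by omega), ← hp (i + k) (by omega)]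
    congr 1; omega

theorem facN_eq_facZOn (h : NestedWindows μ c m) :
    FacN μ = FacZOn (windowLimit μ c) Set.univ ∧
      FacN μ = FacZOn (windowLimit μ c) {z | 0 ≤ z} ∧
      FacN μ = FacZOn (windowLimit μ c) {z | z ≤ 0} :=
  ⟨(h.facN_subset_facZOn_nonpos.trans (facZOn_mono (Set.subset_univ _))).antisymm
      (h.facZOn_subset_facN _),
    h.facN_subset_facZOn_nonneg.antisymm (h.facZOn_subset_facN _),
    h.facN_subset_facZOn_nonpos.antisymm (h.facZOn_subset_facN _)⟩

end NestedWindows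

theorem RecurrentN.exists_nestedWindows (hμ : RecurrentN μ) :
    ∃ c m : ℕ → ℕ, NestedWindows μ c m := by
  choose q hqN hq using recurrentN_iff_forall_prefix.1 hμ
  -- `q L N ≥ N` is a return of the prefix of length `L`; the new origin is `c' = c + q m 1`, and
  -- the new window ends with the copy of the old one at `q m (c' + 1)`
  let step : ℕ × ℕ → ℕ × ℕ := fun w => (w.1 + q w.2 1, q w.2 (w.1 + q w.2 1 + 1) + w.2)
  let w : ℕ → ℕ × ℕ := fun n => step^[n] (0, 1)
  have hw (n : ℕ) : w (n + 1) = step (w n) := Function.iterate_succ_apply' step n (0, 1)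
  refine ⟨fun n => (w n).1, fun n => (w n).2,
    ⟨by simp [w], fun n => ?_, fun n => ?_, fun n k hk => ?_, fun n => ?_⟩⟩
  all_goals simp only [hw, step]
  · have := hqN (w n).2 1; omega
  · have := hqN (w n).2 ((w n).1 + q (w n).2 1 + 1); omega
  · rw [show (w n).1 + q (w n).2 1 - (w n).1 + k = q (w n).2 1 + k by omega]
    exact hq _ _ k hk
  · exact ⟨_, by have := hqN (w n).2 ((w n).1 + q (w n).2 1 + 1); omega, le_rfl, hq _ _⟩

end TwoSided

theorem stmt4 (μ : ℕ → Bool) :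
    (Inexh (FacN μ) ↔ RecurrentN μ) ∧
    (RecurrentN μ ↔ ∃ ν : ℤ → Bool,
      FacN μ = FacZOn ν Set.univ ∧
      FacN μ = FacZOn ν {z : ℤ | 0 ≤ z} ∧
      FacN μ = FacZOn ν {z : ℤ | z ≤ 0}) := by
  refine ⟨inexh_facN_iff_recurrentN, fun hμ => ?_,
    fun ⟨ν, _, _, hν⟩ => recurrentN_of_facN_eq_facZOn_nonpos hν⟩
  obtain ⟨c, m, hw⟩ := hμ.exists_nestedWindows
  exact ⟨windowLimit μ c, hw.facN_eq_facZOn⟩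
end

section
/- Let C be a factor-closed (hereditary) set of finite words over a finite alphabet Σ. If C is inexhaustible, then for every u ∈ C there exists an infinite word w : ℕ → Σ such that u ∈ Fac(w), Fac(w) ⊆ C, and Fac(w) is inexhaustible. Consequently, C is inexhaustible if and only if C is a union of inexhaustible sets of the form Fac(w) for infinite words w. -/
namespace Stmt5Aux

variable {A : Type*}

/-- The factor of `w` of length `n` starting at position `i`. -/
def seg (w : ℕ → A) (i n : ℕ) : List A := (List.range n).map fun k => w (i + k)

@[simp] lemma seg_length (w : ℕ → A) (i n : ℕ) : (seg w i n).length = n := by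
  simp [seg]

lemma mem_FacN_iff {w : ℕ → A} {v : List A} : v ∈ FacN w ↔ ∃ i, v = seg w i v.length :=
  Iff.rfl

lemma seg_mem_FacN (w : ℕ → A) (i n : ℕ) : seg w i n ∈ FacN w := by
  rw [mem_FacN_iff]
  exact ⟨i, by rw [seg_length]⟩

lemma seg_getElem (w : ℕ → A) (i n k : ℕ) (hk : k < n) :
    (seg w i n)[k]'(by simpa using hk) = w (i + k) := by
  simp [seg]

lemma seg_append (w : ℕ → A) (i a b : ℕ) :
    seg w i (a + b) = seg w i a ++ seg w (i + a) b := by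
  simp [seg, List.range_add, List.map_map, Function.comp, add_assoc]

/-- If two segments of the same length coincide, so do corresponding subsegments. -/
lemma seg_shift {w : ℕ → A} {j j' L : ℕ} (h : seg w j L = seg w j' L)
    {i m : ℕ} (him : i + m ≤ L) : seg w (j + i) m = seg w (j' + i) m := by
  have h2 : ∀ t, t < L → w (j + t) = w (j' + t) := by
    intro t ht
    have := List.getElem_of_eq h (show t < (seg w j L).length by simpa using ht)
    rw [seg_getElem w j L t ht] at this
    rw [this, seg_getElem w j' L t ht]
  apply List.ext_getElem (by simp)
  intro k hk1 hk2
  have hk : k < m := by simpa using hk1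
  rw [seg_getElem w (j + i) m k hk, seg_getElem w (j' + i) m k hk,
    add_assoc, add_assoc, h2 (i + k) (by omega)]

/-- Extracting a factor of a segment as a segment. -/
lemma factor_seg {w : ℕ → A} {j : ℕ} {s v t : List A}
    (h : seg w j (s.length + v.length + t.length) = s ++ v ++ t) :
    v = seg w (j + s.length) v.length := by
  rw [seg_append w j (s.length + v.length) t.length,
    seg_append w j s.length v.length] at h
  have h1 := (List.append_inj h (by simp)).1
  exact ((List.append_inj h1 (by simp)).2).symm

lemma seg_split (w : ℕ → A) (i m M : ℕ) (h : i + m ≤ M) :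
    seg w 0 M = seg w 0 i ++ seg w i m ++ seg w (i + m) (M - i - m) := by
  have h2 : seg w 0 (i + (m + (M - i - m))) =
      seg w 0 i ++ (seg w (0 + i) m ++ seg w (0 + i + m) (M - i - m)) := by
    rw [seg_append, seg_append]
  simpa [show i + (m + (M - i - m)) = M by omega, List.append_assoc] using h2

/-- The key construction: from an inexhaustible hereditary class and `u ∈ C`,
produce an infinite word. -/
lemma key (C : Set (List A))
    (hher : ∀ v w : List A, w ∈ C → v <:+: w → v ∈ C)
    (hC : Inexh C) {u : List A} (hu : u ∈ C) :
    ∃ w : ℕ → A, u ∈ FacN w ∧ FacN w ⊆ C ∧ Inexh (FacN w) := by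
  obtain ⟨⟨c, hc⟩, hne, h3⟩ := hC
  -- a nonempty word in C
  have hz : ∃ z ∈ C, z ≠ [] := by
    by_contra hcon
    push_neg at hcon
    apply hne
    ext x
    constructor
    · intro hx; simp [hcon x hx]
    · intro hx; simp at hx; subst hx; simpa [hcon c hc] using hc
  obtain ⟨z, hzC, hzne⟩ := hz
  -- v₀ : a nonempty word in C containing u as a factor
  obtain ⟨v₀, hv₀C, hv₀ne, huv₀⟩ : ∃ v₀ ∈ C, v₀ ≠ [] ∧ u <:+: v₀ := by
    by_cases h : u = []
    · exact ⟨z, hzC, hzne, h ▸ List.nil_infix⟩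
    · exact ⟨u, hu, h, List.infix_refl u⟩
  obtain ⟨a, -, -⟩ := List.exists_cons_of_ne_nil hv₀ne
  choose g hg using h3
  -- the sequence of words
  let V : ℕ → {l : List A // l ∈ C} := fun n =>
    Nat.rec ⟨v₀, hv₀C⟩ (fun _ p => ⟨p.1 ++ g p.1 p.2 ++ p.1, hg p.1 p.2⟩) n
  have Vsucc : ∀ n, (V (n + 1)).1 = (V n).1 ++ g (V n).1 (V n).2 ++ (V n).1 :=
    fun n => rfl
  have Vlen : ∀ n, n < (V n).1.length := by
    intro n
    induction n with
    | zero => simpa [V, List.length_pos_iff] using hv₀ne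
    | succ n ih => rw [Vsucc n]; simp; omega
  have Vprefix : ∀ n m, n ≤ m → (V n).1 <+: (V m).1 := by
    intro n m hnm
    induction m, hnm using Nat.le_induction with
    | base => exact List.prefix_refl _
    | succ m _ ih =>
      refine ih.trans ?_
      rw [Vsucc m, List.append_assoc]
      exact List.prefix_append _ _
  -- the limit word
  set w : ℕ → A := fun i => (V (i + 1)).1.getD i a with hwdef
  have agree : ∀ n m i, i < (V n).1.length → i < (V m).1.length →
      (V n).1.getD i a = (V m).1.getD i a := by
    have aux : ∀ n m i, n ≤ m → i < (V n).1.length →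
        (V n).1.getD i a = (V m).1.getD i a := by
      intro n m i hnm hi
      obtain ⟨t, ht⟩ := Vprefix n m hnm
      rw [← ht, List.getD_append _ _ _ _ hi]
    intro n m i hi hi'
    rcases le_total n m with h | h
    · exact aux n m i h hi
    · exact (aux m n i h hi').symm
  have hwV : ∀ n, (V n).1 = seg w 0 (V n).1.length := by
    intro n
    apply List.ext_getElem (by simp)
    intro k hk1 hk2
    rw [seg_getElem w 0 _ k (by simpa using hk2), zero_add]
    rw [← List.getD_eq_getElem (V n).1 a hk1]
    exact agree n (k + 1) k hk1 (lt_trans (Nat.lt_succ_self k) (Vlen (k + 1)))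
  -- occurrences inside V n give segments
  have hVfac : ∀ n (s v t : List A), (V n).1 = s ++ v ++ t →
      v = seg w s.length v.length := by
    intro n s v t h
    have hlen : (V n).1.length = s.length + v.length + t.length := by
      rw [h]; simp only [List.length_append]
    have h2 := hwV n
    rw [hlen, h] at h2
    have := factor_seg (w := w) (j := 0) h2.symm
    rwa [zero_add] at this
  refine ⟨w, ?_, ?_, ?_, ?_, ?_⟩
  · -- u ∈ FacN w
    obtain ⟨s, t, hst⟩ := huv₀
    rw [mem_FacN_iff]
    exact ⟨s.length, hVfac 0 s u t hst.symm⟩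
  · -- FacN w ⊆ C
    intro v hv
    rw [mem_FacN_iff] at hv
    obtain ⟨i, hvi⟩ := hv
    set n := i + v.length with hn
    have hle : i + v.length ≤ (V n).1.length := le_of_lt (Vlen n)
    have hdec : (V n).1 = seg w 0 i ++ seg w i v.length ++
        seg w (i + v.length) ((V n).1.length - i - v.length) := by
      conv_lhs => rw [hwV n]
      exact seg_split w i v.length _ hle
    have : v <:+: (V n).1 := ⟨seg w 0 i, seg w (i + v.length) _, by rw [hdec, ← hvi]⟩
    exact hher v (V n).1 (V n).2 this
  · -- FacN w nonempty
    exact ⟨[], 0, by simp⟩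
  · -- FacN w ≠ {[]}
    intro h
    have := seg_mem_FacN w 0 1
    rw [h] at this
    simp [seg] at this
  · -- inexhaustibility of FacN w
    intro v hv
    rw [mem_FacN_iff] at hv
    obtain ⟨i, hvi⟩ := hv
    set n := i + v.length with hn
    have hle : i + v.length ≤ (V n).1.length := le_of_lt (Vlen n)
    have hsecond : seg w 0 (V n).1.length =
        seg w ((V n).1.length + (g (V n).1 (V n).2).length) (V n).1.length := by
      have h1 : (V (n + 1)).1 = ((V n).1 ++ g (V n).1 (V n).2) ++ (V n).1 := Vsucc n
      have hlen1 : (V (n + 1)).1.length =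
          ((V n).1.length + (g (V n).1 (V n).2).length) + (V n).1.length := by
        rw [h1]; simp only [List.length_append]
      have h2 := hwV (n + 1)
      rw [hlen1, h1] at h2
      rw [seg_append w 0 _ _] at h2
      have h3 := (List.append_inj h2 (by simp)).2
      rw [zero_add] at h3
      rw [← h3, ← hwV n]
    have hshift := seg_shift hsecond (i := i) (m := v.length) hle
    rw [zero_add] at hshift
    refine ⟨seg w (i + v.length)
      ((V n).1.length + (g (V n).1 (V n).2).length - v.length), ?_⟩
    rw [mem_FacN_iff]
    refine ⟨i, ?_⟩
    rw [show (v ++ seg w (i + v.length)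
          ((V n).1.length + (g (V n).1 (V n).2).length - v.length) ++ v).length
        = v.length + ((V n).1.length + (g (V n).1 (V n).2).length - v.length)
          + v.length by simp only [List.length_append, seg_length]]
    rw [seg_append w i (v.length +
      ((V n).1.length + (g (V n).1 (V n).2).length - v.length)) v.length]
    rw [seg_append w i v.length _]
    rw [show i + (v.length + ((V n).1.length + (g (V n).1 (V n).2).length - v.length))
        = (V n).1.length + (g (V n).1 (V n).2).length + i by omega]
    rw [← hshift, ← hvi]

end Stmt5Aux

theorem stmt5 {A : Type*} [Finite A] (C : Set (List A))
    (hher : ∀ v w : List A, w ∈ C → v <:+: w → v ∈ C) :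
    (Inexh C → ∀ u ∈ C, ∃ w : ℕ → A,
      u ∈ FacN w ∧ FacN w ⊆ C ∧ Inexh (FacN w)) ∧
    (Inexh C ↔ ∃ W : Set (ℕ → A), W.Nonempty ∧ (∀ w ∈ W, Inexh (FacN w)) ∧
      C = ⋃ w ∈ W, FacN w) := by
  constructor
  · intro hC u hu
    exact Stmt5Aux.key C hher hC hu
  · constructor
    · intro hC
      obtain ⟨u, hu⟩ := hC.1
      refine ⟨{w | FacN w ⊆ C ∧ Inexh (FacN w)}, ?_, ?_, ?_⟩
      · obtain ⟨w, -, hsub, hin⟩ := Stmt5Aux.key C hher hC hu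
        exact ⟨w, hsub, hin⟩
      · exact fun w hw => hw.2
      · ext v
        simp only [Set.mem_iUnion, Set.mem_setOf_eq]
        constructor
        · intro hv
          obtain ⟨w, hmem, hsub, hin⟩ := Stmt5Aux.key C hher hC hv
          exact ⟨w, ⟨hsub, hin⟩, hmem⟩
        · rintro ⟨w, ⟨hsub, -⟩, hv⟩
          exact hsub hv
    · rintro ⟨W, ⟨w₀, hw₀⟩, hIW, rfl⟩
      refine ⟨⟨[], ?_⟩, ?_, ?_⟩
      · exact Set.mem_iUnion₂.mpr ⟨w₀, hw₀, 0, by simp⟩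
      · intro h
        have h1 : Stmt5Aux.seg w₀ 0 1 ∈ ⋃ w ∈ W, FacN w :=
          Set.mem_iUnion₂.mpr ⟨w₀, hw₀, Stmt5Aux.seg_mem_FacN w₀ 0 1⟩
        rw [h] at h1
        simp [Stmt5Aux.seg] at h1
      · intro v hv
        obtain ⟨w, hwW, hvw⟩ := Set.mem_iUnion₂.mp hv
        obtain ⟨x, hx⟩ := (hIW w hwW).2.2 v hvw
        exact ⟨x, Set.mem_iUnion₂.mpr ⟨w, hwW, hx⟩⟩
end

section
/- Every infinite well-founded partially ordered set P in which every level is finite contains an initial segment J that is a Jónsson poset, i.e., J is infinite and every proper initial segment of J has cardinality strictly smaller than the cardinality of J. -/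
open IsWellFounded in
/-- rank attainment below an element -/
theorem rank_attain {P : Type*} [PartialOrder P] [WellFoundedLT P]
    (x : P) : ∀ o ≤ rank (α := P) (· < ·) x, ∃ y ≤ x, rank (α := P) (· < ·) y = o := by
  induction x using (IsWellFounded.induction (α := P) (· < ·)) with
  | _ x IH =>
    intro o ho
    rcases ho.eq_or_lt with h | h
    · exact ⟨x, le_rfl, h.symm⟩
    · rw [rank_eq, Ordinal.lt_iSup_iff] at h
      obtain ⟨⟨b, hb⟩, hob⟩ := h
      rw [Order.lt_succ_iff] at hob
      obtain ⟨y, hyb, hy⟩ := IH b hb o hob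
      exact ⟨y, hyb.trans hb.le, hy⟩

open IsWellFounded in
theorem lev_fin {P : Type*} [PartialOrder P] [WellFoundedLT P]
    (hlf : ∀ o : Ordinal, {x : P | rank (α := P) (· < ·) x = o}.Finite) (n : ℕ) :
    {x : P | rank (α := P) (· < ·) x < n}.Finite := by
  have : {x : P | rank (α := P) (· < ·) x < n} ⊆
      ⋃ k ∈ Finset.range n, {x : P | rank (α := P) (· < ·) x = k} := by
    intro x hx
    have hω : rank (α := P) (· < ·) x < Ordinal.omega0 :=
      lt_of_lt_of_le hx (Ordinal.nat_lt_omega0 n).le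
    obtain ⟨k, hk⟩ := Ordinal.lt_omega0.mp hω
    have hkn : k < n := by
      have h2 : rank (α := P) (· < ·) x < (n : Ordinal) := hx
      rw [hk] at h2; exact_mod_cast h2
    simp only [Set.mem_iUnion]
    exact ⟨k, Finset.mem_range.mpr hkn, hk⟩
  exact Set.Finite.subset (Set.Finite.biUnion (Finset.range n).finite_toSet
    (fun k _ => hlf k)) this

open IsWellFounded in
theorem meets_level {P : Type*} [PartialOrder P] [WellFoundedLT P]
    (hlf : ∀ o : Ordinal, {x : P | rank (α := P) (· < ·) x = o}.Finite)
    (A : Set P) (hAinf : A.Infinite) (hAdc : ∀ x y : P, x ≤ y → y ∈ A → x ∈ A) (n : ℕ) :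
    ∃ x ∈ A, rank (α := P) (· < ·) x = n := by
  have : ∃ x ∈ A, (n : Ordinal) ≤ rank (α := P) (· < ·) x := by
    by_contra h
    push_neg at h
    exact hAinf (Set.Finite.subset (lev_fin hlf n) (fun x hx => h x hx))
  obtain ⟨x, hxA, hxn⟩ := this
  obtain ⟨y, hyx, hy⟩ := rank_attain x n hxn
  exact ⟨y, hAdc y x hyx hxA, hy⟩

theorem stmt6 {P : Type*} [PartialOrder P] [Infinite P] [WellFoundedLT P]
    (hlf : ∀ o : Ordinal, {x : P | IsWellFounded.rank (α := P) (· < ·) x = o}.Finite) :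
    ∃ J : Set P,
      (∀ x y : P, x ≤ y → y ∈ J → x ∈ J) ∧
      J.Infinite ∧
      ∀ I : Set P, I ⊆ J → I ≠ J →
        (∀ x y : P, x ∈ J → y ∈ I → x ≤ y → x ∈ I) →
        Cardinal.mk I < Cardinal.mk J := by
  classical
  set rk : P → Ordinal := IsWellFounded.rank (α := P) (· < ·) with hrk
  set S : Set (Set P) := {A | A.Infinite ∧ ∀ x y : P, x ≤ y → y ∈ A → x ∈ A} with hS
  have hzorn : ∃ m, Minimal (· ∈ S) m := by
    apply zorn_superset
    intro c hcS hchain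
    rcases c.eq_empty_or_nonempty with rfl | hcne
    · refine ⟨Set.univ, ⟨Set.infinite_univ, fun _ _ _ _ => Set.mem_univ _⟩, by simp⟩
    · refine ⟨⋂₀ c, ⟨?_, ?_⟩, fun s hs => Set.sInter_subset_of_mem hs⟩
      · -- infinite
        have key : ∀ n : ℕ, ∃ x ∈ ⋂₀ c, rk x = n := by
          intro n
          set L : Set P := {x | rk x = n} with hL
          have hvals : {m : ℕ | ∃ A ∈ c, (A ∩ L).ncard = m}.Nonempty := by
            obtain ⟨A, hA⟩ := hcne
            exact ⟨(A ∩ L).ncard, A, hA, rfl⟩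
          obtain ⟨A₀, hA₀c, hA₀min⟩ : ∃ A₀ ∈ c, ∀ A ∈ c,
              (A₀ ∩ L).ncard ≤ (A ∩ L).ncard := by
            obtain ⟨A₀, hA₀c, hm⟩ := Nat.sInf_mem hvals
            exact ⟨A₀, hA₀c, fun A hA => hm ▸ Nat.sInf_le ⟨A, hA, rfl⟩⟩
          have hLfin : L.Finite := hlf n
          have hsub : ∀ A ∈ c, A₀ ∩ L ⊆ A ∩ L := by
            intro A hA
            rcases hchain.total hA₀c hA with h | h
            · rcases eq_or_ne A₀ A with rfl | hne
              · exact subset_rfl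
              · exact Set.inter_subset_inter_left L h
            · have hsub2 : A ∩ L ⊆ A₀ ∩ L := Set.inter_subset_inter_left L h
              have := Set.eq_of_subset_of_ncard_le hsub2
                (hA₀min A hA) (hLfin.subset Set.inter_subset_right)
              exact this.symm.subset
          obtain ⟨x, hxA₀, hxrk⟩ := meets_level hlf A₀ (hcS hA₀c).1 (hcS hA₀c).2 n
          refine ⟨x, ?_, hxrk⟩
          intro A hA
          exact ((hsub A hA) ⟨hxA₀, hxrk⟩).1
        choose f hf hfr using key
        refine Set.infinite_of_injective_forall_mem (f := f) ?_ hf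
        intro a b hab
        have h3 := hfr a
        rw [hab, hfr b] at h3
        exact (show a = b by exact_mod_cast h3.symm)
      · -- down-closed
        intro x y hxy hy A hA
        exact (hcS hA).2 x y hxy (hy A hA)
  obtain ⟨J, hJmin⟩ := hzorn
  obtain ⟨hJinf, hJdc⟩ := hJmin.prop
  refine ⟨J, hJdc, hJinf, ?_⟩
  intro I hIJ hIne hIdc
  have hIfin : I.Finite := by
    by_contra hInf
    have hIinf : I.Infinite := hInf
    have hIdc' : ∀ x y : P, x ≤ y → y ∈ I → x ∈ I := by
      intro x y hxy hyI
      exact hIdc x y (hJdc x y hxy (hIJ hyI)) hyI hxy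
    have : J ⊆ I := hJmin.2 ⟨hIinf, hIdc'⟩ hIJ
    exact hIne (le_antisymm hIJ this)
  have : Finite I := hIfin
  have : Infinite J := hJinf.to_subtype
  exact lt_of_lt_of_le (Cardinal.lt_aleph0_of_finite I) (Cardinal.aleph0_le_mk J)
end

section
/- Let μ : {1,2,3,…} → {0,1} be a 0-1 word. Then the graph G_μ is a comparability graph and its complement is also a comparability graph; that is, there exist partial orders ≤₁ and ≤₂ on the vertex set ℕ such that two distinct vertices are adjacent in G_μ if and only if they are comparable in ≤₁, and two distinct vertices are non-adjacent in G_μ if and only if they are comparable in ≤₂. In particular, every finite induced subgraph of G_μ is a permutation graph. -/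
/-- Adjacency rule of the graph associated with a 0-1 word `μ` (letters indexed from 1):
for `i < j`, `{i,j}` is an edge iff (`μ j = 1` and `j = i+1`) or (`μ j = 0` and `j ≠ i+1`). -/
def GmuAdj (μ : ℕ → Bool) (i j : ℕ) : Prop :=
  (i < j ∧ ((μ j = true ∧ j = i + 1) ∨ (μ j = false ∧ j ≠ i + 1))) ∨
  (j < i ∧ ((μ i = true ∧ i = j + 1) ∨ (μ i = false ∧ i ≠ j + 1)))

/-- The graph `G_μ` on `ℕ` associated with the 0-1 word `μ : {1,2,…} → {0,1}`. -/
def Gmu (μ : ℕ → Bool) : SimpleGraph ℕ where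
  Adj i j := GmuAdj μ i j
  symm := ⟨fun i j h => Or.symm h⟩
  loopless := ⟨fun i h => by
    rcases h with ⟨h1, _⟩ | ⟨h1, _⟩ <;> exact lt_irrefl i h1⟩

/-- Adjacency rule for the graph of a finite 0-1 word `w = w₁…wₙ` on vertices `{0,…,n}`. -/
def GWAdj (w : List Bool) (i j : ℕ) : Prop :=
  (i < j ∧ ((w.getD (j - 1) false = true ∧ j = i + 1) ∨
            (w.getD (j - 1) false = false ∧ j ≠ i + 1))) ∨
  (j < i ∧ ((w.getD (i - 1) false = true ∧ i = j + 1) ∨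
            (w.getD (i - 1) false = false ∧ i ≠ j + 1)))

/-- The graph `G_w` of a finite 0-1 word `w = w₁…wₙ`, on the vertex set `{0,1,…,n}`. -/
def GW (w : List Bool) : SimpleGraph (Fin (w.length + 1)) where
  Adj i j := GWAdj w i j
  symm := ⟨fun i j h => Or.symm h⟩
  loopless := ⟨fun i h => by
    rcases h with ⟨h1, _⟩ | ⟨h1, _⟩ <;> exact lt_irrefl (i : ℕ) h1⟩

/-- `M` is a module of the graph `G`: every vertex outside `M` is adjacent either to all
vertices of `M` or to none of them. -/
def IsModule {V : Type*} (G : SimpleGraph V) (M : Set V) : Prop :=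
  ∀ x ∉ M, (∀ a ∈ M, G.Adj x a) ∨ (∀ a ∈ M, ¬ G.Adj x a)

/-- A graph is prime if its only modules are the empty set, singletons and the whole
vertex set. -/
def GraphPrime {V : Type*} (G : SimpleGraph V) : Prop :=
  ∀ M : Set V, IsModule G M → M = ∅ ∨ (∃ a, M = {a}) ∨ M = Set.univ

/-- `G` is a comparability graph: there is a partial order on the vertices whose pairs of
distinct comparable elements are exactly the edges of `G`. -/
def IsComparabilityGraph {V : Type*} (G : SimpleGraph V) : Prop :=
  ∃ r : V → V → Prop, IsPartialOrder V r ∧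
    ∀ a b : V, a ≠ b → (G.Adj a b ↔ (r a b ∨ r b a))

/-!
Each vertex `j` is placed on two lines, at the far left or far right of all earlier vertices
in both, so that its order relative to every `i < j - 1` is dictated by two signs; the
previous vertex `j - 1` lies just outside `j` on one line, which reverses exactly that one
pair. Choosing the signs according to `μ j` makes `G_μ` the graph of pairs ordered differently
on the two lines, so both `G_μ` and its complement are comparability graphs, and this
representation restricts to induced subgraphs.
-/

open Function

section PermutationRepresentation

variable {V α β : Type*} [LinearOrder α] [LinearOrder β]

structure IsPermutationRep (G : SimpleGraph V) (f : V → α) (g : V → β) : Prop where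
  injective_left : Injective f
  injective_right : Injective g
  adj_iff : ∀ a b, G.Adj a b ↔ (f a < f b ∧ g b < g a) ∨ (f b < f a ∧ g a < g b)

namespace IsPermutationRep

variable {G : SimpleGraph V} {f : V → α} {g : V → β}

theorem isComparabilityGraph (h : IsPermutationRep G f g) : IsComparabilityGraph G := by
  refine ⟨fun a b => a = b ∨ (f a < f b ∧ g b < g a), ?_, fun a b hab => ?_⟩
  · refine { refl := fun a => Or.inl rfl, trans := ?_, antisymm := ?_ }
    · rintro a b c (rfl | ⟨hf₁, hg₁⟩) (rfl | ⟨hf₂, hg₂⟩)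
      · exact Or.inl rfl
      · exact Or.inr ⟨hf₂, hg₂⟩
      · exact Or.inr ⟨hf₁, hg₁⟩
      · exact Or.inr ⟨hf₁.trans hf₂, hg₂.trans hg₁⟩
    · rintro a b (rfl | ⟨hf₁, -⟩) (h₂ | ⟨hf₂, -⟩)
      · rfl
      · rfl
      · exact h₂.symm
      · exact absurd (hf₁.trans hf₂) (lt_irrefl _)
  · simp only [h.adj_iff, hab, hab.symm, false_or]

theorem compl (h : IsPermutationRep G f g) : IsPermutationRep Gᶜ f (OrderDual.toDual ∘ g) where
  injective_left := h.injective_left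
  injective_right := OrderDual.toDual.injective.comp h.injective_right
  adj_iff a b := by
    simp only [SimpleGraph.compl_adj, h.adj_iff, comp_apply, OrderDual.toDual_lt_toDual]
    by_cases hab : a = b
    · simp [hab]
    have hf := h.injective_left.ne hab
    have hg := h.injective_right.ne hab
    grind

theorem induce (h : IsPermutationRep G f g) (s : Set V) :
    IsPermutationRep (G.induce s) (f ∘ (↑)) (g ∘ (↑)) where
  injective_left := h.injective_left.comp Subtype.val_injective
  injective_right := h.injective_right.comp Subtype.val_injective
  adj_iff a b := h.adj_iff a b

theorem of_lt [LinearOrder V] (hf : Injective f) (hg : Injective g)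
    (hadj : ∀ a b, a < b → (G.Adj a b ↔ (f a < f b ↔ g b < g a))) :
    IsPermutationRep G f g where
  injective_left := hf
  injective_right := hg
  adj_iff a b := by
    rcases lt_trichotomy a b with hab | rfl | hab
    · have := hf.ne hab.ne
      have := hg.ne hab.ne
      grind
    · simp
    · have := hf.ne hab.ne
      have := hg.ne hab.ne
      grind [G.adj_comm]

end IsPermutationRep

end PermutationRepresentation

namespace Gmu

theorem adj_iff_of_lt (μ : ℕ → Bool) {i j : ℕ} (hij : i < j) :
    (Gmu μ).Adj i j ↔ (μ j = true ↔ i + 1 = j) := by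
  change GmuAdj μ i j ↔ _
  unfold GmuAdj
  cases μ j <;> grind

/-- The sides (`true` = right) of the origin on which vertex `j` lies on the two lines. At odd
`j` the first is chosen afresh, at even `j` the second, so that they agree iff `μ j`. -/
def sides (μ : ℕ → Bool) : ℕ → Bool × Bool
  | 0 => (true, true)
  | j + 1 =>
    if j % 2 = 0 then (if μ (j + 1) then (sides μ j).2 else !(sides μ j).2, (sides μ j).2)
    else ((sides μ j).1, if μ (j + 1) then (sides μ j).1 else !(sides μ j).1)

theorem sides_succ_fst_of_odd (μ : ℕ → Bool) {j : ℕ} (hj : j % 2 = 1) :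
    (sides μ (j + 1)).1 = (sides μ j).1 := by
  simp [sides, hj]

theorem sides_succ_snd_of_even (μ : ℕ → Bool) {j : ℕ} (hj : j % 2 = 0) :
    (sides μ (j + 1)).2 = (sides μ j).2 := by
  simp [sides, hj]

theorem sides_succ_fst_eq_snd_iff (μ : ℕ → Bool) (j : ℕ) :
    (sides μ (j + 1)).1 = (sides μ (j + 1)).2 ↔ μ (j + 1) = true := by
  by_cases hj : j % 2 = 0 <;> cases hμ : μ (j + 1) <;> simp [sides, hj, hμ]

def signed (s : Bool) (m : ℕ) : ℤ := if s then m else -m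

theorem abs_signed (s : Bool) (m : ℕ) : |signed s m| = m := by
  cases s <;> simp [signed]

theorem lt_signed_iff {x : ℤ} {m : ℕ} (hx : |x| < m) (s : Bool) :
    x < signed s m ↔ s = true := by
  rw [abs_lt] at hx
  cases s <;> simp [signed] <;> omega

theorem signed_lt_signed_iff {m m' : ℕ} (h : m < m') (s : Bool) :
    signed s m' < signed s m ↔ s = false := by
  cases s <;> simp [signed] <;> omega

/-- Vertex `j` lies at distance `2j + 3` from the origin on one line and `2j` on the other,
alternating with the parity of `j`: on the line where `j` is at `2j`, the vertex `j - 1` is at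
`2j + 1`, just outside `j`, while every `i < j - 1` is strictly inside. -/
def xMag (j : ℕ) : ℕ := if j % 2 = 1 then 2 * j + 3 else 2 * j

def yMag (j : ℕ) : ℕ := if j % 2 = 1 then 2 * j else 2 * j + 3

def xCoord (μ : ℕ → Bool) (j : ℕ) : ℤ := signed (sides μ j).1 (xMag j)

def yCoord (μ : ℕ → Bool) (j : ℕ) : ℤ := signed (sides μ j).2 (yMag j)

theorem xCoord_injective (μ : ℕ → Bool) : Injective (xCoord μ) := by
  intro i j h
  have := congrArg abs h
  simp only [xCoord, abs_signed, Nat.cast_inj, xMag] at this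
  split_ifs at this <;> omega

theorem yCoord_injective (μ : ℕ → Bool) : Injective (yCoord μ) := by
  intro i j h
  have := congrArg abs h
  simp only [yCoord, abs_signed, Nat.cast_inj, yMag] at this
  split_ifs at this <;> omega

theorem xCoord_lt_iff (μ : ℕ → Bool) {i j : ℕ} (hij : i < j) :
    xCoord μ i < xCoord μ j ↔ ((sides μ j).1 = true ↔ ¬(i + 1 = j ∧ j % 2 = 0)) := by
  by_cases hnear : i + 1 = j ∧ j % 2 = 0
  · obtain ⟨rfl, hj⟩ := hnear
    rw [xCoord, xCoord, sides_succ_fst_of_odd μ (by omega),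
      signed_lt_signed_iff (by unfold xMag; split_ifs <;> omega)]
    simp [hj]
  · have hfar : |xCoord μ i| < xMag j := by
      rw [xCoord, abs_signed, Nat.cast_lt]; unfold xMag; split_ifs <;> omega
    simp only [hnear, not_false_eq_true, iff_true]
    exact lt_signed_iff hfar _

theorem yCoord_lt_iff (μ : ℕ → Bool) {i j : ℕ} (hij : i < j) :
    yCoord μ i < yCoord μ j ↔ ((sides μ j).2 = true ↔ ¬(i + 1 = j ∧ j % 2 = 1)) := by
  by_cases hnear : i + 1 = j ∧ j % 2 = 1
  · obtain ⟨rfl, hj⟩ := hnear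
    rw [yCoord, yCoord, sides_succ_snd_of_even μ (by omega),
      signed_lt_signed_iff (by unfold yMag; split_ifs <;> omega)]
    simp [hj]
  · have hfar : |yCoord μ i| < yMag j := by
      rw [yCoord, abs_signed, Nat.cast_lt]; unfold yMag; split_ifs <;> omega
    simp only [hnear, not_false_eq_true, iff_true]
    exact lt_signed_iff hfar _

theorem isPermutationRep (μ : ℕ → Bool) :
    IsPermutationRep (Gmu μ) (xCoord μ) (yCoord μ) := by
  refine .of_lt (xCoord_injective μ) (yCoord_injective μ) fun i j hij => ?_
  obtain ⟨k, rfl⟩ : ∃ k, j = k + 1 := ⟨j - 1, by omega⟩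
  have hy : yCoord μ (k + 1) < yCoord μ i ↔ ¬yCoord μ i < yCoord μ (k + 1) := by
    have := (yCoord_injective μ).ne hij.ne
    omega
  rw [adj_iff_of_lt μ hij, xCoord_lt_iff μ hij, hy, yCoord_lt_iff μ hij,
    ← sides_succ_fst_eq_snd_iff]
  rcases Nat.mod_two_eq_zero_or_one (k + 1) with hp | hp <;>
    cases (sides μ (k + 1)).1 <;> cases (sides μ (k + 1)).2 <;> simp [hp]

end Gmu

theorem stmt7 (μ : ℕ → Bool) :
    IsComparabilityGraph (Gmu μ) ∧
    IsComparabilityGraph (Gmu μ)ᶜ ∧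
    ∀ S : Finset ℕ,
      IsComparabilityGraph ((Gmu μ).induce (↑S : Set ℕ)) ∧
      IsComparabilityGraph (((Gmu μ).induce (↑S : Set ℕ))ᶜ) := by
  have h := Gmu.isPermutationRep μ
  exact ⟨h.isComparabilityGraph, h.compl.isComparabilityGraph,
    fun S => ⟨(h.induce _).isComparabilityGraph, (h.induce _).compl.isComparabilityGraph⟩⟩
end

section
/- Let μ : {1,2,3,…} → {0,1} be a 0-1 word. The graph G_μ is prime if and only if μ is not one of the four words 0111…, 1000…, 00111…, 11000… (i.e., μ is not of the form: one letter a followed by the constant word on the opposite letter, nor two equal letters a a followed by the constant word on the opposite letter). -/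
/-!
Vertex `j` is joined to its predecessor `j - 1` iff `μ j = 1` and to every smaller vertex
iff `μ j = 0`, so it always separates `j - 1` from the vertices below it. Hence a module
containing `c < d` contains `d + 1`, and a nontrivial proper module contains a final segment of
`ℕ`. If `x` is the largest vertex outside it, `x` sees `x + 1` and `x + 2` alike, forcing
`μ (x + 1) ≠ μ (x + 2)`, so every vertex below `x` separates `x + 1` from `x + 2` and must lie in
the module; and `x` separates `x - 1` from `x - 2`, so `x ≤ 1`. Thus the nontrivial modules
are the sets `{x}ᶜ` with `x ∈ {0, 1}` isolated or universal, which happens exactly for the four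
exceptional words.
-/

open Set

section Module

variable {V : Type*} {G : SimpleGraph V} {M : Set V}

theorem IsModule.adj_iff_adj (hM : IsModule G M) {x a b : V} (hx : x ∉ M) (ha : a ∈ M)
    (hb : b ∈ M) : G.Adj x a ↔ G.Adj x b := by
  rcases hM x hx with h | h
  · exact iff_of_true (h a ha) (h b hb)
  · exact iff_of_false (h a ha) (h b hb)

theorem isModule_compl_singleton_iff {x : V} :
    IsModule G {x}ᶜ ↔ (∀ a ≠ x, ¬G.Adj x a) ∨ ∀ a ≠ x, G.Adj x a := by
  simp [IsModule, or_comm]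

theorem not_graphPrime_of_isModule_compl_singleton [Infinite V] {x : V}
    (h : IsModule G {x}ᶜ) : ¬GraphPrime G := by
  intro hG
  have hinf : ({x}ᶜ : Set V).Infinite := (finite_singleton x).infinite_compl
  rcases hG _ h with h | ⟨a, h⟩ | h
  · exact hinf (h ▸ finite_empty)
  · exact hinf (h ▸ finite_singleton a)
  · exact (h ▸ mem_univ x : x ∈ ({x}ᶜ : Set V)) rfl

end Module

section Gmu

variable {μ : ℕ → Bool} {M : Set ℕ}

theorem gmu_adj_succ (μ : ℕ → Bool) (i : ℕ) : (Gmu μ).Adj i (i + 1) ↔ μ (i + 1) = true := by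
  change GmuAdj μ _ _ ↔ _
  simp [GmuAdj]

theorem gmu_adj_of_succ_lt (μ : ℕ → Bool) {i j : ℕ} (h : i + 1 < j) :
    (Gmu μ).Adj i j ↔ μ j = false := by
  change GmuAdj μ _ _ ↔ _
  simp only [GmuAdj]
  constructor
  · rintro (⟨-, ⟨-, rfl⟩ | ⟨hj, -⟩⟩ | ⟨_, -⟩)
    · omega
    · exact hj
    · omega
  · exact fun hj => Or.inl ⟨by omega, Or.inr ⟨hj, by omega⟩⟩

theorem IsModule.gmu_succ_mem (hM : IsModule (Gmu μ) M) {c d : ℕ} (hc : c ∈ M) (hd : d ∈ M)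
    (hcd : c < d) : d + 1 ∈ M := by
  by_contra h
  have := hM.adj_iff_adj h hd hc
  rw [SimpleGraph.adj_comm, gmu_adj_succ, SimpleGraph.adj_comm,
    gmu_adj_of_succ_lt μ (by omega)] at this
  simp at this

theorem IsModule.gmu_eq_compl_singleton (hM : IsModule (Gmu μ) M) {x : ℕ} (hx : x ∉ M)
    (hgt : ∀ y, x < y → y ∈ M) : x ≤ 1 ∧ M = {x}ᶜ := by
  have hx12 := hM.adj_iff_adj hx (hgt (x + 1) (by omega)) (hgt (x + 2) (by omega))
  rw [gmu_adj_succ, gmu_adj_of_succ_lt μ (by omega)] at hx12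
  have hlt : ∀ y < x, y ∈ M := by
    intro y hy
    by_contra h
    have hy12 := hM.adj_iff_adj h (hgt (x + 1) (by omega)) (hgt (x + 2) (by omega))
    rw [gmu_adj_of_succ_lt μ (by omega), gmu_adj_of_succ_lt μ (by omega)] at hy12
    cases μ (x + 1) <;> cases μ (x + 2) <;> simp_all
  refine ⟨?_, ?_⟩
  · by_contra! h2
    obtain ⟨z, rfl⟩ : ∃ z, x = z + 2 := ⟨x - 2, by omega⟩
    have h := hM.adj_iff_adj hx (hlt (z + 1) (by omega)) (hlt z (by omega))
    rw [SimpleGraph.adj_comm, gmu_adj_succ, SimpleGraph.adj_comm,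
      gmu_adj_of_succ_lt μ (by omega)] at h
    simp at h
  · ext y
    rcases lt_trichotomy y x with hy | rfl | hy
    · simp [hlt y hy, hy.ne]
    · simp [hx]
    · simp [hgt y hy, hy.ne']

theorem IsModule.gmu_exists_eq_compl_singleton (hM : IsModule (Gmu μ) M) {a b : ℕ}
    (ha : a ∈ M) (hb : b ∈ M) (hab : a < b) (hM_ne : M ≠ univ) : ∃ x ≤ 1, M = {x}ᶜ := by
  have hge : ∀ n, b ≤ n → n ∈ M := by
    intro n hn
    induction n, hn using Nat.le_induction with
    | base => exact hb
    | succ n hbn ih => exact hM.gmu_succ_mem ha ih (by omega)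
  have hbdd : BddAbove Mᶜ := ⟨b, fun n hn => by by_contra h; exact hn (hge n (by omega))⟩
  have hne : Mᶜ.Nonempty := nonempty_compl.mpr hM_ne
  have hx : sSup Mᶜ ∉ M := Nat.sSup_mem hne hbdd
  have hgt : ∀ y, sSup Mᶜ < y → y ∈ M := fun y hy => by
    by_contra h
    exact hy.not_ge (le_csSup hbdd h)
  exact ⟨_, hM.gmu_eq_compl_singleton hx hgt⟩

end Gmu

section Exceptional

variable {μ : ℕ → Bool}

def IsExceptionalWord (μ : ℕ → Bool) : Prop :=
  (μ 1 = false ∧ ∀ j : ℕ, 2 ≤ j → μ j = true) ∨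
  (μ 1 = true ∧ ∀ j : ℕ, 2 ≤ j → μ j = false) ∨
  (μ 1 = false ∧ μ 2 = false ∧ ∀ j : ℕ, 3 ≤ j → μ j = true) ∨
  (μ 1 = true ∧ μ 2 = true ∧ ∀ j : ℕ, 3 ≤ j → μ j = false)

theorem gmu_forall_adj_zero_iff (p : Prop) :
    (∀ a ≠ 0, (Gmu μ).Adj 0 a ↔ p) ↔
      (μ 1 = true ↔ p) ∧ ∀ j, 2 ≤ j → (μ j = false ↔ p) := by
  constructor
  · intro h
    exact ⟨(gmu_adj_succ μ 0).symm.trans (h 1 one_ne_zero),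
      fun j hj => (gmu_adj_of_succ_lt μ hj).symm.trans (h j (by omega))⟩
  · rintro ⟨h1, h⟩ a ha
    obtain rfl | ha2 : a = 1 ∨ 2 ≤ a := by omega
    exacts [(gmu_adj_succ μ 0).trans h1, (gmu_adj_of_succ_lt μ ha2).trans (h a ha2)]

theorem gmu_forall_adj_one_iff (p : Prop) :
    (∀ a ≠ 1, (Gmu μ).Adj 1 a ↔ p) ↔
      (μ 1 = true ↔ p) ∧ (μ 2 = true ↔ p) ∧ ∀ j, 3 ≤ j → (μ j = false ↔ p) := by
  have h10 : (Gmu μ).Adj 1 0 ↔ μ 1 = true := ((Gmu μ).adj_comm 1 0).trans (gmu_adj_succ μ 0)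
  constructor
  · intro h
    exact ⟨h10.symm.trans (h 0 zero_ne_one), (gmu_adj_succ μ 1).symm.trans (h 2 (by omega)),
      fun j hj => (gmu_adj_of_succ_lt μ hj).symm.trans (h j (by omega))⟩
  · rintro ⟨h1, h2, h⟩ a ha
    obtain rfl | rfl | ha3 : a = 0 ∨ a = 2 ∨ 3 ≤ a := by omega
    exacts [h10.trans h1, (gmu_adj_succ μ 1).trans h2, (gmu_adj_of_succ_lt μ ha3).trans (h a ha3)]

theorem isExceptionalWord_iff_exists_isModule_compl_singleton :
    IsExceptionalWord μ ↔ ∃ x ≤ 1, IsModule (Gmu μ) {x}ᶜ := by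
  have h0 := gmu_forall_adj_zero_iff (μ := μ) True
  have h0' := gmu_forall_adj_zero_iff (μ := μ) False
  have h1 := gmu_forall_adj_one_iff (μ := μ) True
  have h1' := gmu_forall_adj_one_iff (μ := μ) False
  simp only [iff_true, iff_false, Bool.not_eq_true, Bool.not_eq_false] at h0 h0' h1 h1'
  simp only [isModule_compl_singleton_iff, Nat.le_one_iff_eq_zero_or_eq_one, exists_eq_or_imp,
    exists_eq_left, h0, h0', h1, h1', or_assoc, IsExceptionalWord]

theorem graphPrime_gmu_iff : GraphPrime (Gmu μ) ↔ ¬IsExceptionalWord μ := by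
  rw [isExceptionalWord_iff_exists_isModule_compl_singleton]
  constructor
  · rintro hG ⟨x, -, hx⟩
    exact not_graphPrime_of_isModule_compl_singleton hx hG
  · intro hμ M hM
    by_cases hs : M.Subsingleton
    · exact hs.eq_empty_or_singleton.imp id Or.inl
    obtain ⟨a, ha, b, hb, hab⟩ := not_subsingleton_iff.mp hs
    refine Or.inr (Or.inr (by_contra fun hM_ne => hμ ?_))
    obtain ⟨x, hx, rfl⟩ : ∃ x ≤ 1, M = {x}ᶜ := by
      rcases hab.lt_or_gt with h | h
      · exact hM.gmu_exists_eq_compl_singleton ha hb h hM_ne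
      · exact hM.gmu_exists_eq_compl_singleton hb ha h hM_ne
    exact ⟨x, hx, hM⟩

end Exceptional

theorem stmt8 (μ : ℕ → Bool) :
    GraphPrime (Gmu μ) ↔
      ¬ ((μ 1 = false ∧ ∀ j : ℕ, 2 ≤ j → μ j = true) ∨
         (μ 1 = true ∧ ∀ j : ℕ, 2 ≤ j → μ j = false) ∨
         (μ 1 = false ∧ μ 2 = false ∧ ∀ j : ℕ, 3 ≤ j → μ j = true) ∨
         (μ 1 = true ∧ μ 2 = true ∧ ∀ j : ℕ, 3 ≤ j → μ j = false)) :=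
  graphPrime_gmu_iff
end

section
/- Let μ : ℤ → {0,1} be a two-sided 0-1 word. Then the graph G_μ with vertex set ℤ is prime. -/
/-- Adjacency rule of the graph associated with a two-sided 0-1 word `μ : ℤ → {0,1}`:
for `i < j`, `{i,j}` is an edge iff (`μ j = 1` and `j = i+1`) or (`μ j = 0` and `j ≠ i+1`). -/
def GmuZAdj (μ : ℤ → Bool) (i j : ℤ) : Prop :=
  (i < j ∧ ((μ j = true ∧ j = i + 1) ∨ (μ j = false ∧ j ≠ i + 1))) ∨
  (j < i ∧ ((μ i = true ∧ i = j + 1) ∨ (μ i = false ∧ i ≠ j + 1)))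

/-- The graph `G_μ` on `ℤ` associated with a two-sided 0-1 word. -/
def GmuZ (μ : ℤ → Bool) : SimpleGraph ℤ where
  Adj i j := GmuZAdj μ i j
  symm := ⟨fun i j h => Or.symm h⟩
  loopless := ⟨fun i h => by
    rcases h with ⟨h1, _⟩ | ⟨h1, _⟩ <;> exact lt_irrefl i h1⟩

/-!
If a module `M` of `G_μ` contains `a < b`, then `b + 1` is adjacent to exactly one of `a`, `b`
(which one depends on `μ (b + 1)`), so `b + 1 ∈ M` and `M` contains every integer `≥ b`.
Below `a`, the vertex `a - 1` separates `a` from `b` when `μ a = μ b`, and `a - 2` does otherwise,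
so `M` has no least element. Hence `M = ℤ`.
-/

theorem IsModule.mem_of_not_adj_iff {V : Type*} {G : SimpleGraph V} {M : Set V}
    (hM : IsModule G M) {a b z : V} (ha : a ∈ M) (hb : b ∈ M)
    (hz : ¬ (G.Adj z a ↔ G.Adj z b)) : z ∈ M := by
  by_contra hzM
  rcases hM z hzM with h | h
  · exact hz (iff_of_true (h a ha) (h b hb))
  · exact hz (iff_of_false (h a ha) (h b hb))

namespace GmuZ

variable {μ : ℤ → Bool}

theorem adj_add_one (x : ℤ) : (GmuZ μ).Adj x (x + 1) ↔ μ (x + 1) = true := by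
  change GmuZAdj μ x (x + 1) ↔ _
  unfold GmuZAdj
  cases μ (x + 1) <;> simp

theorem adj_of_add_one_lt {x y : ℤ} (h : x + 1 < y) : (GmuZ μ).Adj x y ↔ μ y = false := by
  change GmuZAdj μ x y ↔ _
  unfold GmuZAdj
  cases μ y <;> simp <;> omega

variable {M : Set ℤ} {a b : ℤ}

theorem add_one_mem (hM : IsModule (GmuZ μ) M) (ha : a ∈ M) (hb : b ∈ M) (hab : a < b) :
    b + 1 ∈ M := by
  refine hM.mem_of_not_adj_iff ha hb ?_
  rw [SimpleGraph.adj_comm, adj_of_add_one_lt (by omega), SimpleGraph.adj_comm, adj_add_one]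
  cases μ (b + 1) <;> simp

theorem Ici_subset (hM : IsModule (GmuZ μ) M) (ha : a ∈ M) (hb : b ∈ M) (hab : a < b) :
    Set.Ici b ⊆ M := by
  intro z (hz : b ≤ z)
  induction z, hz using Int.leInduction with
  | base => exact hb
  | succ z hbz ih => exact add_one_mem hM ha ih (by omega)

theorem exists_mem_lt (hM : IsModule (GmuZ μ) M) (ha : a ∈ M) (hb : b ∈ M) (hab : a < b) :
    ∃ e ∈ M, e < a := by
  by_cases hμ : μ a = μ b
  · refine ⟨a - 1, hM.mem_of_not_adj_iff ha hb ?_, by omega⟩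
    have hconsec := adj_add_one (μ := μ) (a - 1)
    rw [sub_add_cancel] at hconsec
    rw [hconsec, adj_of_add_one_lt (by omega), ← hμ]
    cases μ a <;> simp
  · refine ⟨a - 2, hM.mem_of_not_adj_iff ha hb ?_, by omega⟩
    rw [adj_of_add_one_lt (by omega), adj_of_add_one_lt (by omega)]
    cases ha' : μ a <;> cases hb' : μ b <;> simp_all

theorem not_bddBelow (hM : IsModule (GmuZ μ) M) (ha : a ∈ M) (hb : b ∈ M) (hab : a ≠ b) :
    ¬ BddBelow M := by
  rintro ⟨l, hl⟩
  obtain ⟨m, hm, hmin⟩ := Int.exists_least_of_bdd ⟨l, hl⟩ ⟨a, ha⟩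
  obtain ⟨c, hc, hcm⟩ : ∃ c ∈ M, m < c := by
    by_cases ham : a = m
    · exact ⟨b, hb, lt_of_le_of_ne (hmin b hb) (ham ▸ hab)⟩
    · exact ⟨a, ha, lt_of_le_of_ne (hmin a ha) (Ne.symm ham)⟩
  obtain ⟨e, he, hem⟩ := exists_mem_lt hM hm hc hcm
  exact (hmin e he).not_gt hem

theorem eq_univ (hM : IsModule (GmuZ μ) M) (ha : a ∈ M) (hb : b ∈ M) (hab : a ≠ b) :
    M = Set.univ := by
  refine Set.eq_univ_of_forall fun z => ?_
  have hunb := not_bddBelow hM ha hb hab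
  obtain ⟨d, hd, hdz⟩ := not_bddBelow_iff.mp hunb (z + 1)
  obtain ⟨c, hc, hcd⟩ := not_bddBelow_iff.mp hunb d
  exact Ici_subset hM hc hd hcd (show d ≤ z by omega)

end GmuZ

theorem stmt9 (μ : ℤ → Bool) : GraphPrime (GmuZ μ) := by
  intro M hM
  rcases M.eq_empty_or_nonempty with hempty | ⟨a, ha⟩
  · exact Or.inl hempty
  by_cases hsingle : ∀ b ∈ M, b = a
  · exact Or.inr (Or.inl ⟨a, Set.eq_singleton_iff_unique_mem.mpr ⟨ha, hsingle⟩⟩)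
  push Not at hsingle
  obtain ⟨b, hb, hba⟩ := hsingle
  exact Or.inr (Or.inr (GmuZ.eq_univ hM ha hb hba.symm))
end

section
/- Let w = w₁…wₙ be a finite 0-1 word and let l ∈ ℕ. If every constant factor of w (a factor all of whose letters are 0, or all 1) has length at most l, and n > l + 4, then the graph G_w is prime. Equivalently, if G_w is not prime then w contains 0^{n-4} or 1^{n-4} as a factor. -/
/-!
Let `M` be a module of `G_w` with at least two elements, not containing every vertex, and let
`m < s` be its two least elements. If `t ≥ s` lies in `M` then so does `t + 1`: otherwise `t + 1`
would be adjacent to `t` iff `w_{t+1} = 1` but to `m` iff `w_{t+1} = 0`. Hence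
`M = {m} ∪ [s, n]`. Comparing how a vertex `p ∉ M` sees a member at distance one and another at
distance at least two, and how a second vertex `y ∉ M` sees both at distance at least two, forces
`m ≤ 1` and `s ∈ {2, n}`. In these two cases the letters `w_3 … w_n`, resp.
`w_{m+2} … w_{n-2}`, are all equal, which is a constant factor of length at least `n - 4`.
-/

theorem gwAdj_comm {w : List Bool} {i j : ℕ} : GWAdj w i j ↔ GWAdj w j i :=
  ⟨Or.symm, Or.symm⟩

theorem gwAdj_iff_of_add_two_le {w : List Bool} {i j : ℕ} (h : i + 2 ≤ j) :
    GWAdj w i j ↔ w.getD (j - 1) false = false := by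
  constructor
  · rintro (⟨-, ⟨-, h2⟩ | ⟨h1, -⟩⟩ | ⟨h1, -⟩)
    · omega
    · exact h1
    · omega
  · exact fun hj => Or.inl ⟨by omega, Or.inr ⟨hj, by omega⟩⟩

theorem gwAdj_iff_of_eq_add_one {w : List Bool} {i j : ℕ} (h : j = i + 1) :
    GWAdj w i j ↔ w.getD (j - 1) false = true := by
  constructor
  · rintro (⟨-, ⟨h1, -⟩ | ⟨-, h2⟩⟩ | ⟨h1, -⟩)
    · exact h1
    · omega
    · omega
  · exact fun hj => Or.inl ⟨by omega, Or.inl ⟨hj, h⟩⟩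

theorem replicate_infix_of_getD_eq {w : List Bool} {c : Bool} {lo hi : ℕ} (hlo : 1 ≤ lo)
    (hhi : hi ≤ w.length) (hlen : w.length + lo ≤ hi + 5)
    (hrun : ∀ k, lo ≤ k → k ≤ hi → w.getD (k - 1) false = c) :
    List.replicate (w.length - 4) c <:+: w := by
  have hfactor : ((w.drop (lo - 1)).take (w.length - 4)) <:+: w :=
    (List.take_prefix _ _).isInfix.trans (List.drop_suffix _ _).isInfix
  convert hfactor using 1
  rw [eq_comm, List.eq_replicate_iff]
  refine ⟨by simp; omega, fun b hb => ?_⟩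
  obtain ⟨i, hi, rfl⟩ := List.mem_iff_getElem.1 hb
  simp only [List.length_take, List.length_drop] at hi
  have hk := hrun (lo + i) (by omega) (by omega)
  rw [List.getD_eq_getElem _ _ (by omega)] at hk
  rw [List.getElem_take, List.getElem_drop, ← hk]
  congr 1
  omega

theorem Set.Nontrivial.exists_two_least {S : Set ℕ} (hS : S.Nontrivial) :
    ∃ m ∈ S, ∃ s ∈ S, m < s ∧ ∀ k < s, k ∈ S → k = m := by
  have hm : sInf S ∈ S := Nat.sInf_mem hS.nonempty
  have hs : sInf (S \ {sInf S}) ∈ S \ {sInf S} := Nat.sInf_mem (hS.exists_ne _)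
  refine ⟨_, hm, _, hs.1, lt_of_le_of_ne (Nat.sInf_le hs.1) (Ne.symm hs.2), fun k hk hkS => ?_⟩
  by_contra hkm
  exact (Nat.sInf_le (show k ∈ S \ {sInf S} from ⟨hkS, hkm⟩)).not_gt hk

/-- A set of vertices of `G_w`, seen as natural numbers, that is a module. -/
structure IsWordModule (w : List Bool) (S : Set ℕ) : Prop where
  le_length : ∀ a ∈ S, a ≤ w.length
  adj_iff : ∀ x ≤ w.length, x ∉ S → ∀ a ∈ S, ∀ b ∈ S, (GWAdj w x a ↔ GWAdj w x b)

theorem IsModule.isWordModule_image {w : List Bool} {M : Set (Fin (w.length + 1))}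
    (hM : IsModule (GW w) M) : IsWordModule w (Fin.val '' M) where
  le_length := by
    rintro _ ⟨a, -, rfl⟩
    exact a.is_le
  adj_iff := by
    rintro x hx hxS _ ⟨a, ha, rfl⟩ _ ⟨b, hb, rfl⟩
    have hxM : (⟨x, by omega⟩ : Fin (w.length + 1)) ∉ M := fun h => hxS ⟨_, h, rfl⟩
    rcases hM _ hxM with h | h
    · exact iff_of_true (h a ha) (h b hb)
    · exact iff_of_false (h a ha) (h b hb)

namespace IsWordModule

variable {w : List Bool} {S : Set ℕ}

theorem mem_of_le (hS : IsWordModule w S) {m s t : ℕ} (hm : m ∈ S) (hs : s ∈ S) (hms : m < s)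
    (hst : s ≤ t) (htn : t ≤ w.length) : t ∈ S := by
  induction t, hst using Nat.le_induction with
  | base => exact hs
  | succ t hst ih =>
    by_contra ht
    have h := hS.adj_iff (t + 1) htn ht t (ih (by omega)) m hm
    rw [gwAdj_comm, gwAdj_iff_of_eq_add_one rfl, gwAdj_comm,
      gwAdj_iff_of_add_two_le (by omega)] at h
    simp at h

theorem getD_eq_of_far_below (hS : IsWordModule w S) {x a b : ℕ} (hx : x ∉ S) (ha : a ∈ S)
    (hb : b ∈ S) (hxa : x + 2 ≤ a) (hxb : x + 2 ≤ b) :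
    w.getD (a - 1) false = w.getD (b - 1) false := by
  have h := hS.adj_iff x (by linarith [hS.le_length a ha]) hx a ha b hb
  rw [gwAdj_iff_of_add_two_le hxa, gwAdj_iff_of_add_two_le hxb] at h
  rw [← Bool.not_eq_true, ← Bool.not_eq_true, not_iff_not] at h
  exact Bool.eq_iff_iff.2 h

theorem getD_eq_of_between (hS : IsWordModule w S) {x a b : ℕ} (hx : x ∉ S) (ha : a ∈ S)
    (hb : b ∈ S) (hax : a + 2 ≤ x) (hxb : x + 2 ≤ b) :
    w.getD (x - 1) false = w.getD (b - 1) false := by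
  have h := hS.adj_iff x (by linarith [hS.le_length b hb]) hx a ha b hb
  rw [gwAdj_comm, gwAdj_iff_of_add_two_le hax, gwAdj_iff_of_add_two_le hxb] at h
  rw [← Bool.not_eq_true, ← Bool.not_eq_true, not_iff_not] at h
  exact Bool.eq_iff_iff.2 h

theorem false_of_near_far (hS : IsWordModule w S) {p y a b : ℕ} (hp : p ∉ S) (hy : y ∉ S)
    (hpa : a = p + 1) (hya : y + 2 ≤ a) (hab : a < b) (ha : a ∈ S) (hb : b ∈ S) : False := by
  have han := hS.le_length a ha
  have hnear := hS.adj_iff p (by omega) hp a ha b hb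
  rw [gwAdj_iff_of_eq_add_one hpa, gwAdj_iff_of_add_two_le (by omega)] at hnear
  have hfar := hS.adj_iff y (by omega) hy a ha b hb
  rw [gwAdj_iff_of_add_two_le hya, gwAdj_iff_of_add_two_le (by omega)] at hfar
  cases w.getD (a - 1) false <;> simp_all

theorem exists_replicate_infix (hS : IsWordModule w S) (hnt : S.Nontrivial) {c : ℕ}
    (hc : c ∉ S) (hcn : c ≤ w.length) : ∃ b, List.replicate (w.length - 4) b <:+: w := by
  obtain ⟨m, hm, s, hs, hms, hleast⟩ := hnt.exists_two_least
  have hsn := hS.le_length s hs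
  have hup : ∀ t, s ≤ t → t ≤ w.length → t ∈ S := fun t => hS.mem_of_le hm hs hms
  have hout : ∀ k < s, k ≠ m → k ∉ S := fun k hk hkm hkS => hkm (hleast k hk hkS)
  have hcs : c < s := by
    by_contra
    exact hc (hup c (by omega) hcn)
  have hcm : c ≠ m := fun h => hc (h ▸ hm)
  have hm1 : m ≤ 1 := by
    by_contra
    exact hS.false_of_near_far (hout (m - 1) (by omega) (by omega)) (hout 0 (by omega) (by omega))
      (by omega) (by omega) hms hm hs
  -- `1 - m` is the vertex of `{0, 1}` other than `m`
  have hu : 1 - m ∉ S := hout _ (by omega) (by omega)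
  rcases (show s = 2 ∨ s = w.length ∨ (3 ≤ s ∧ s < w.length) by omega)
    with h2 | hn | ⟨h3, hslt⟩
  · refine ⟨w.getD (3 - 1) false, replicate_infix_of_getD_eq (lo := 3) (by norm_num) le_rfl
      (by omega) fun k h3k hkn => ?_⟩
    exact hS.getD_eq_of_far_below hu (hup k (by omega) hkn) (hup 3 (by omega) (by omega))
      (by omega) (by omega)
  · refine ⟨w.getD (s - 1) false, replicate_infix_of_getD_eq (lo := m + 2) (hi := w.length - 2)
      (by omega) (by omega) (by omega) fun k hk hkn => ?_⟩
    exact hS.getD_eq_of_between (hout k (by omega) (by omega)) hm hs (by omega) (by omega)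
  · exact (hS.false_of_near_far (hout (s - 1) (by omega) (by omega)) hu (by omega) (by omega)
      (Nat.lt_succ_self s) hs (hup (s + 1) (by omega) (by omega))).elim

end IsWordModule

theorem replicate_infix_of_not_graphPrime {w : List Bool} (h : ¬ GraphPrime (GW w)) :
    List.replicate (w.length - 4) false <:+: w ∨ List.replicate (w.length - 4) true <:+: w := by
  simp only [GraphPrime, not_forall, not_or] at h
  obtain ⟨M, hM, hne, hsingleton, huniv⟩ := h
  have hnt : M.Nontrivial :=
    (Set.nonempty_iff_ne_empty.2 hne).exists_eq_singleton_or_nontrivial.resolve_left hsingleton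
  obtain ⟨c, hc⟩ := (Set.ne_univ_iff_exists_notMem M).1 huniv
  exact Bool.exists_bool.1 <| hM.isWordModule_image.exists_replicate_infix
    (hnt.image Fin.val_injective) (fun ⟨_, h, hval⟩ => hc (Fin.val_injective hval ▸ h))
    c.is_le

theorem stmt10 (w : List Bool) (l : ℕ) :
    ((∀ v : List Bool, v <:+: w →
        ((∀ x ∈ v, x = false) ∨ (∀ x ∈ v, x = true)) → v.length ≤ l) →
      l + 4 < w.length → GraphPrime (GW w)) ∧
    (¬ GraphPrime (GW w) →
      (List.replicate (w.length - 4) false <:+: w ∨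
       List.replicate (w.length - 4) true <:+: w)) := by
  refine ⟨fun hfactors hlen => ?_, replicate_infix_of_not_graphPrime⟩
  by_contra hnp
  have hconst : ∀ b, List.replicate (w.length - 4) b <:+: w → w.length - 4 ≤ l :=
    fun b hb => by simpa using hfactors _ hb (by cases b <;> simp)
  rcases replicate_infix_of_not_graphPrime hnp with h | h <;> have := hconst _ h <;> omega
end

section
/- Let μ : {1,2,3,…} → {0,1} be a 0-1 word and let F be a nonempty finite subset of ℕ (the vertex set of G_μ). If the subgraph of G_μ induced on F is prime, then F ∖ {min F} is an interval of ℕ, i.e., a set of consecutive integers. -/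
/-! If `c ∉ F` lies strictly between two elements of `F`, then the vertices of `F` below `c` form
a module of `G_μ[F]`: a vertex `x > c` is never the successor of a vertex `y < c`, so `x` is
adjacent to all of them when `μ x = 0` and to none when `μ x = 1`. This module contains `min F`
and a second vertex, and misses a vertex above `c`, so it is nontrivial. -/

theorem GraphPrime.not_isModule {V : Type*} {G : SimpleGraph V} (hG : GraphPrime G)
    {M : Set V} {a b c : V} (ha : a ∈ M) (hb : b ∈ M) (hab : a ≠ b) (hc : c ∉ M) :
    ¬ IsModule G M := by
  intro hM
  rcases hG M hM with rfl | ⟨z, rfl⟩ | rfl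
  · exact ha
  · exact hab (ha.trans hb.symm)
  · exact hc (Set.mem_univ c)

theorem gmu_adj_iff_of_succ_lt (μ : ℕ → Bool) {x y : ℕ} (h : y + 1 < x) :
    (Gmu μ).Adj x y ↔ μ x = false := by
  show GmuAdj μ x y ↔ _
  unfold GmuAdj
  constructor
  · rintro (⟨_, _⟩ | ⟨_, ⟨_, _⟩ | ⟨hx, _⟩⟩)
    · omega
    · omega
    · exact hx
  · exact fun hx => Or.inr ⟨by omega, Or.inr ⟨hx, by omega⟩⟩

theorem isModule_induce_setOf_lt (μ : ℕ → Bool) {S : Set ℕ} {c : ℕ} (hc : c ∉ S) :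
    IsModule ((Gmu μ).induce S) {x : S | (x : ℕ) < c} := by
  intro x hx
  have hcx : c < (x : ℕ) := by
    rw [Set.mem_ofPred_eq, not_lt] at hx
    exact lt_of_le_of_ne hx fun h => hc (h ▸ x.2)
  have hadj : ∀ y ∈ {y : S | (y : ℕ) < c}, ((Gmu μ).induce S).Adj x y ↔ μ x = false :=
    fun y (hy : (y : ℕ) < c) => gmu_adj_iff_of_succ_lt μ (x := x) (y := y) (by omega)
  cases hμ : μ x with
  | false => exact Or.inl fun y hy => (hadj y hy).mpr hμ
  | true => exact Or.inr fun y hy h => by simpa [hμ] using (hadj y hy).mp h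

theorem stmt11 (μ : ℕ → Bool) (F : Finset ℕ) (hF : F.Nonempty)
    (hprime : GraphPrime ((Gmu μ).induce (↑F : Set ℕ))) :
    ∀ a b c : ℕ, a ∈ F → b ∈ F → a ≠ F.min' hF → b ≠ F.min' hF →
      a ≤ c → c ≤ b → c ∈ F := by
  intro a b c ha hb hamin _ hac hcb
  by_contra hc
  have hac' : a < c := lt_of_le_of_ne hac fun h => hc (h ▸ ha)
  have hcb' : c < b := lt_of_le_of_ne hcb fun h => hc (h ▸ hb)
  refine hprime.not_isModule (M := {x : (↑F : Set ℕ) | (x : ℕ) < c})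
    (a := ⟨a, ha⟩) (b := ⟨F.min' hF, F.min'_mem hF⟩) (c := ⟨b, hb⟩) hac'
    ((F.min'_le a ha).trans_lt hac') (fun h => hamin (congrArg Subtype.val h)) hcb'.not_gt
    (isModule_induce_setOf_lt μ (by exact_mod_cast hc))
end

section
/- Let μ : {1,2,3,…} → {0,1} be a recurrent 0-1 word and let X be a factor-closed set of finite 0-1 words. If every finite induced subgraph of G_μ admits an induced embedding into G_w for some w ∈ X, then every finite factor of μ belongs to X. In particular, if μ' : {1,2,3,…} → {0,1} is another 0-1 word and every finite induced subgraph of G_μ admits an induced embedding into G_{μ'}, then Fac(μ) ⊆ Fac(μ'). -/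
/-- The set of finite factors of the 0-1 word `μ : {1,2,…} → {0,1}` (letters indexed
from 1). -/
def Fac1 (μ : ℕ → Bool) : Set (List Bool) :=
  {v | ∃ i : ℕ, v = (List.range v.length).map fun k => μ (i + 1 + k)}

/-- `μ` is recurrent: every finite factor occurs at infinitely many positions. -/
def Recurrent1 (μ : ℕ → Bool) : Prop :=
  ∀ v ∈ Fac1 μ, ∀ N : ℕ, ∃ i ≥ N, v = (List.range v.length).map fun k => μ (i + 1 + k)

/-!
If `f` embeds `G_c` restricted to `{0, …, m}` into `G_ω`, look at the vertex `s` sent to the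
top of the image. In `G_ω` the largest vertex `y` of a finite set is adjacent to at most one
other vertex of the set (`y - 1`) or non-adjacent to at most one, so the same holds for `s`
in `G_c`. Below the top, for `t ≥ 3`, the lower neighbours of `t` are `{t - 1}` or
`{0, …, t - 2}`, and matching them with the lower neighbours of `f t` forces
`f (t - 1) = f t - 1` and `ω (f t) = c t`. Descending from `s`, the letters `c₃ ⋯ c_s` occur
in `ω`.

It remains to choose the window `c` of `μ` so that `s` lies beyond the given factor, which
recurrence lets us place from position `3` of the window on. If `μ` takes both values, two `0`s
and two `1`s after the factor keep `s` from falling inside it; if `μ` is constant, `s` is `0` or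
`m`, and the reflection `j ↦ m - j` is an automorphism of `G_c`.
-/

open Finset

section Adjacency

variable {c : ℕ → Bool} {i j : ℕ}

theorem gmuAdj_comm : GmuAdj c i j ↔ GmuAdj c j i :=
  ⟨Or.symm, Or.symm⟩

theorem gmuAdj_of_lt (h : i < j) : GmuAdj c i j ↔ (c j = true ↔ i + 1 = j) := by
  unfold GmuAdj
  cases c j <;> simp <;> omega

theorem gmuAdj_of_add_two_le (h : i + 2 ≤ j) : GmuAdj c i j ↔ c j = false := by
  rw [gmuAdj_of_lt (by omega)]
  cases c j <;> simp <;> omega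

theorem gmuAdj_shift (a : ℕ) : GmuAdj (fun t => c (a + t)) i j ↔ GmuAdj c (a + i) (a + j) := by
  unfold GmuAdj
  constructor <;> rintro (⟨_, ⟨_, _⟩ | ⟨_, _⟩⟩ | ⟨_, ⟨_, _⟩ | ⟨_, _⟩⟩) <;> simp_all <;> omega

theorem gmuAdj_of_const {m : ℕ} {b : Bool} (hc : ∀ t, 1 ≤ t → t ≤ m → c t = b)
    (hi : i ≤ m) (hj : j ≤ m) : GmuAdj c i j ↔ i ≠ j ∧ (b = true ↔ i + 1 = j ∨ j + 1 = i) := by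
  rcases lt_trichotomy i j with h | rfl | h
  · rw [gmuAdj_of_lt h, hc j (by omega) hj]; cases b <;> simp <;> omega
  · simp [GmuAdj]
  · rw [gmuAdj_comm, gmuAdj_of_lt h, hc i (by omega) hi]; cases b <;> simp <;> omega

end Adjacency

structure IsWordEmbedding (c ω : ℕ → Bool) (m : ℕ) (f : ℕ → ℕ) : Prop where
  injOn : ∀ i ≤ m, ∀ j ≤ m, f i = f j → i = j
  adj_iff : ∀ i ≤ m, ∀ j ≤ m, GmuAdj c i j ↔ GmuAdj ω (f i) (f j)

namespace IsWordEmbedding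

variable {c ω : ℕ → Bool} {m : ℕ} {f : ℕ → ℕ}

theorem letter_eq_and_apply_pred (hf : IsWordEmbedding c ω m f) {t : ℕ} (ht : 3 ≤ t) (htm : t ≤ m)
    (hbelow : ∀ j < t, f j < f t) : ω (f t) = c t ∧ f (t - 1) + 1 = f t := by
  have key : ∀ j < t, (c t = true ↔ j + 1 = t) ↔ (ω (f t) = true ↔ f j + 1 = f t) :=
    fun j hj => by
      rw [← gmuAdj_of_lt hj, ← gmuAdj_of_lt (hbelow j hj)]
      exact hf.adj_iff j (by omega) t htm
  have h0 := key 0 (by omega)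
  have h1 := key 1 (by omega)
  have hpred := key (t - 1) (by omega)
  have h01 : f 0 ≠ f 1 := fun h => absurd (hf.injOn 0 (by omega) 1 (by omega) h) (by omega)
  -- `0` and `1` lie below `t - 1`, so `t` treats them alike, yet only one of them can be sent
  -- to `f t - 1`.
  have hletter : ω (f t) = c t := by
    revert h0 h1 hpred
    cases c t <;> cases ω (f t) <;> simp <;> omega
  refine ⟨hletter, ?_⟩
  rw [hletter, show t - 1 + 1 = t by omega] at hpred
  revert hpred
  cases c t <;> simp

theorem descent_from_top (hf : IsWordEmbedding c ω m f) {s : ℕ} (hsm : s ≤ m)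
    (htop : ∀ j < s, f j < f s) :
    ∀ t, 2 ≤ t → t ≤ s → (∀ j < t, f j < f t) ∧ f t + (s - t) = f s := by
  suffices h : ∀ k, k + 2 ≤ s → (∀ j < s - k, f j < f (s - k)) ∧ f (s - k) + k = f s by
    intro t h2 hts
    simpa [show s - (s - t) = t by omega] using h (s - t) (by omega)
  intro k
  induction k with
  | zero => exact fun _ => ⟨htop, rfl⟩
  | succ k ih =>
    intro hk
    obtain ⟨hbelow, hoffset⟩ := ih (by omega)
    have hpred := (hf.letter_eq_and_apply_pred (by omega) (by omega) hbelow).2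
    rw [show s - k - 1 = s - (k + 1) by omega] at hpred
    refine ⟨fun j hj => ?_, by omega⟩
    have hne : f j ≠ f (s - (k + 1)) := fun h => by
      have := hf.injOn j (by omega) _ (by omega) h
      omega
    have := hbelow j (by omega)
    omega

theorem exists_factor_of_top (hf : IsWordEmbedding c ω m f) {s L N : ℕ} (hsm : s ≤ m)
    (htop : ∀ j ≤ m, j ≠ s → f j < f s) (hL : L + 3 ≤ s) (hN : ∀ j ≤ m, f j ≤ N) :
    ∃ p, 1 ≤ p ∧ p + L ≤ N ∧ ∀ k < L, ω (p + k) = c (3 + k) := by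
  have hdesc := hf.descent_from_top hsm (fun j hj => htop j (by omega) (by omega))
  have hrun : ∀ k, 3 + k ≤ s → f (3 + k) = f 3 + k := fun k hk => by
    have h1 := (hdesc (3 + k) (by omega) hk).2
    have h2 := (hdesc 3 (by omega) (by omega)).2
    omega
  refine ⟨f 3, ?_, ?_, fun k hk => ?_⟩
  · have h2 := (hdesc 2 le_rfl (by omega)).2
    have h3 := (hdesc 3 (by omega) (by omega)).2
    omega
  · rw [← hrun L (by omega)]; exact hN _ (by omega)
  · rw [← hrun k (by omega)]
    exact (hf.letter_eq_and_apply_pred (by omega) (by omega)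
      (hdesc (3 + k) (by omega) (by omega)).1).1

theorem exists_top (hf : IsWordEmbedding c ω m f) : ∃ s ≤ m, ∀ j ≤ m, j ≠ s → f j < f s := by
  obtain ⟨s, hs, hmax⟩ := (range (m + 1)).exists_max_image f ⟨0, by simp⟩
  rw [mem_range] at hs
  refine ⟨s, by omega, fun j hj hne => lt_of_le_of_ne (hmax j (by simp; omega)) fun h => ?_⟩
  exact hne (hf.injOn j hj s (by omega) h)

theorem subsingleton_of_top (hf : IsWordEmbedding c ω m f) {s : ℕ} (hsm : s ≤ m)
    (htop : ∀ j ≤ m, j ≠ s → f j < f s) :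
    ∃ β : Bool, {j | j ≤ m ∧ j ≠ s ∧ (GmuAdj c s j ↔ β = true)}.Subsingleton := by
  refine ⟨ω (f s), fun j₁ ⟨hj₁, hne₁, hadj₁⟩ j₂ ⟨hj₂, hne₂, hadj₂⟩ => ?_⟩
  have hsucc : ∀ j ≤ m, j ≠ s → (GmuAdj c s j ↔ ω (f s) = true) → f j + 1 = f s :=
    fun j hj hne hadj => by
      rw [gmuAdj_comm, hf.adj_iff j hj s hsm, gmuAdj_of_lt (htop j hj hne)] at hadj
      revert hadj
      cases ω (f s) <;> simp
  exact hf.injOn j₁ hj₁ j₂ hj₂ (by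
    have := hsucc j₁ hj₁ hne₁ hadj₁
    have := hsucc j₂ hj₂ hne₂ hadj₂
    omega)

theorem reflect {b : Bool} (hc : ∀ t, 1 ≤ t → t ≤ m → c t = b)
    (hf : IsWordEmbedding c ω m f) : IsWordEmbedding c ω m (fun j => f (m - j)) where
  injOn i hi j hj h := by
    have := hf.injOn _ (Nat.sub_le m i) _ (Nat.sub_le m j) h
    omega
  adj_iff i hi j hj := by
    rw [← hf.adj_iff _ (Nat.sub_le m i) _ (Nat.sub_le m j), gmuAdj_of_const hc hi hj,
      gmuAdj_of_const hc (Nat.sub_le m i) (Nat.sub_le m j)]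
    cases b <;> simp <;> omega

theorem exists_factor_of_const (hf : IsWordEmbedding c ω m f) {b : Bool} {L N : ℕ}
    (hc : ∀ t, 1 ≤ t → t ≤ m → c t = b) (hm : L + 5 ≤ m) (hN : ∀ j ≤ m, f j ≤ N) :
    ∃ p, 1 ≤ p ∧ p + L ≤ N ∧ ∀ k < L, ω (p + k) = c (3 + k) := by
  obtain ⟨s, hsm, htop⟩ := hf.exists_top
  have hend : s = 0 ∨ s = m := by
    by_contra! hs
    obtain ⟨β, hsub⟩ := hf.subsingleton_of_top hsm htop
    have hnear : ∀ j ≤ m, (j + 1 = s ∨ s + 1 = j) → (GmuAdj c s j ↔ b = true) :=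
      fun j hj hj' => by rw [gmuAdj_of_const hc hsm hj]; cases b <;> simp <;> omega
    have hfar : ∀ j ≤ m, (j + 2 ≤ s ∨ s + 2 ≤ j) → (GmuAdj c s j ↔ b = false) :=
      fun j hj hj' => by rw [gmuAdj_of_const hc hsm hj]; cases b <;> simp <;> omega
    by_cases hβ : β = b
    · subst hβ
      have := @hsub (s - 1) ⟨by omega, by omega, hnear _ (by omega) (by omega)⟩
        (s + 1) ⟨by omega, by omega, hnear _ (by omega) (by omega)⟩
      omega
    · obtain ⟨j₁, j₂, hj₁, hj₂, hne, hfar₁, hfar₂⟩ : ∃ j₁ j₂, j₁ ≤ m ∧ j₂ ≤ m ∧ j₁ ≠ j₂ ∧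
          (j₁ + 2 ≤ s ∨ s + 2 ≤ j₁) ∧ (j₂ + 2 ≤ s ∨ s + 2 ≤ j₂) := by
        by_cases h3 : 3 ≤ s
        · exact ⟨0, 1, by omega, by omega, by omega, by omega, by omega⟩
        · exact ⟨m - 1, m, by omega, le_rfl, by omega, by omega, by omega⟩
      have hβ' : ∀ j ≤ m, (j + 2 ≤ s ∨ s + 2 ≤ j) → (GmuAdj c s j ↔ β = true) :=
        fun j hj hj' => by rw [hfar j hj hj']; cases β <;> cases b <;> simp_all
      exact hne (hsub ⟨hj₁, by omega, hβ' j₁ hj₁ hfar₁⟩ ⟨hj₂, by omega, hβ' j₂ hj₂ hfar₂⟩)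
  rcases hend with rfl | rfl
  · refine (hf.reflect hc).exists_factor_of_top le_rfl (fun j hj hne => ?_) (by omega)
      (fun j _ => hN _ (Nat.sub_le m j))
    simpa using htop (m - j) (Nat.sub_le m j) (by omega)
  · exact hf.exists_factor_of_top le_rfl htop (by omega) hN

theorem exists_factor_of_frequent (hf : IsWordEmbedding c ω m f) {L N : ℕ}
    (hfreq : ∀ β : Bool, ∃ t₁ t₂, L + 4 ≤ t₁ ∧ t₁ < t₂ ∧ t₂ ≤ m ∧ c t₁ = β ∧ c t₂ = β)
    (hN : ∀ j ≤ m, f j ≤ N) :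
    ∃ p, 1 ≤ p ∧ p + L ≤ N ∧ ∀ k < L, ω (p + k) = c (3 + k) := by
  obtain ⟨s, hsm, htop⟩ := hf.exists_top
  refine hf.exists_factor_of_top hsm htop ?_ hN
  by_contra! hs
  obtain ⟨β, hsub⟩ := hf.subsingleton_of_top hsm htop
  obtain ⟨t₁, t₂, ht₁, ht₁₂, ht₂, hc₁, hc₂⟩ := hfreq (!β)
  have hfar : ∀ t, s + 2 ≤ t → c t = !β → (GmuAdj c s t ↔ β = true) := fun t ht hct => by
    rw [gmuAdj_of_add_two_le ht, hct]
    cases β <;> simp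
  have := hsub ⟨by omega, by omega, hfar t₁ (by omega) hc₁⟩ ⟨ht₂, by omega, hfar t₂ (by omega) hc₂⟩
  omega

end IsWordEmbedding

theorem Recurrent1.frequently {μ : ℕ → Bool} (hrec : Recurrent1 μ) {t : ℕ} (ht : 1 ≤ t) (N : ℕ) :
    ∃ t' ≥ N, μ t' = μ t := by
  have hmem : [μ t] ∈ Fac1 μ := ⟨t - 1, by simp [show t - 1 + 1 = t by omega]⟩
  obtain ⟨i, hi, heq⟩ := hrec _ hmem N
  exact ⟨i + 1, by omega, by simpa using heq.symm⟩

theorem Recurrent1.exists_window {μ : ℕ → Bool} (hrec : Recurrent1 μ) {v : List Bool}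
    (hv : v ∈ Fac1 μ) :
    ∃ a m, ∀ ω f N, IsWordEmbedding (fun t => μ (a + t)) ω m f → (∀ j ≤ m, f j ≤ N) →
      ∃ p, 1 ≤ p ∧ p + v.length ≤ N ∧ v = (List.range v.length).map fun k => ω (p + k) := by
  by_cases hconst : ∃ b, ∀ t, 1 ≤ t → μ t = b
  · obtain ⟨b, hb⟩ := hconst
    obtain ⟨i, hi⟩ := hv
    refine ⟨0, v.length + 5, fun ω f N hf hN => ?_⟩
    obtain ⟨p, hp, hpN, hletters⟩ :=
      hf.exists_factor_of_const (fun t ht _ => by simpa using hb t ht) le_rfl hN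
    refine ⟨p, hp, hpN, hi.trans (List.map_congr_left fun k hk => ?_)⟩
    rw [hletters k (List.mem_range.1 hk), zero_add, hb _ (by omega), hb _ (by omega)]
  · push Not at hconst
    have hpair : ∀ β N, ∃ t₁ t₂, N ≤ t₁ ∧ t₁ < t₂ ∧ μ t₁ = β ∧ μ t₂ = β := fun β N => by
      obtain ⟨t, ht, hne⟩ := hconst (!β)
      obtain ⟨t₁, ht₁, h₁⟩ := hrec.frequently ht N
      obtain ⟨t₂, ht₂, h₂⟩ := hrec.frequently ht (t₁ + 1)
      have hβ : μ t = β := by cases β <;> simpa using hne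
      exact ⟨t₁, t₂, ht₁, ht₂, h₁.trans hβ, h₂.trans hβ⟩
    -- an occurrence at `i ≥ 2` puts `v` at positions `3, 4, …` of the window starting at `i - 2`
    obtain ⟨i, hi2, hi⟩ := hrec v hv 2
    obtain ⟨x₁, x₂, hx₁, hx₂, hμx₁, hμx₂⟩ := hpair false (i + v.length + 2)
    obtain ⟨y₁, y₂, hy₁, hy₂, hμy₁, hμy₂⟩ := hpair true (i + v.length + 2)
    have hshift : ∀ x ≥ i - 2, μ (i - 2 + (x - (i - 2))) = μ x := fun x hx => by
      rw [Nat.add_sub_cancel' hx]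
    refine ⟨i - 2, x₂ + y₂, fun ω f N hf hN => ?_⟩
    obtain ⟨p, hp, hpN, hletters⟩ := hf.exists_factor_of_frequent (L := v.length) (fun β => by
      cases β
      · exact ⟨x₁ - (i - 2), x₂ - (i - 2), by omega, by omega, by omega,
          (hshift x₁ (by omega)).trans hμx₁, (hshift x₂ (by omega)).trans hμx₂⟩
      · exact ⟨y₁ - (i - 2), y₂ - (i - 2), by omega, by omega, by omega,
          (hshift y₁ (by omega)).trans hμy₁, (hshift y₂ (by omega)).trans hμy₂⟩) hN
    refine ⟨p, hp, hpN, hi.trans (List.map_congr_left fun k hk => ?_)⟩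
    rw [hletters k (List.mem_range.1 hk), show i - 2 + (3 + k) = i + 1 + k by omega]

theorem exists_isWordEmbedding {V : Type*} {H : SimpleGraph V} {μ ω : ℕ → Bool} (π : V → ℕ)
    (hπ : Function.Injective π) (hH : ∀ x y, H.Adj x y ↔ GmuAdj ω (π x) (π y)) {a m : ℕ}
    (F : (Gmu μ).induce (↑(Icc a (a + m)) : Set ℕ) ↪g H) :
    ∃ f, IsWordEmbedding (fun t => μ (a + t)) ω m f ∧ ∀ j ≤ m, ∃ x, f j = π x := by
  have hmem : ∀ j ≤ m, a + j ∈ (↑(Icc a (a + m)) : Set ℕ) := fun j hj => by simp; omega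
  refine ⟨fun j => if h : j ≤ m then π (F ⟨a + j, hmem j h⟩) else 0, ⟨fun i hi j hj h => ?_,
    fun i hi j hj => ?_⟩, fun j hj => ⟨_, dif_pos hj⟩⟩
  · simp only [dif_pos hi, dif_pos hj] at h
    have := congrArg Subtype.val (F.injective (hπ h))
    simp only at this
    omega
  · simp only [dif_pos hi, dif_pos hj, ← hH, F.map_rel_iff]
    exact gmuAdj_shift a

theorem infix_map_getD {w : List Bool} {p L : ℕ} (hp : 1 ≤ p) (hpL : p + L ≤ w.length + 1) :
    ((List.range L).map fun k => w.getD (p + k - 1) false) <:+: w := by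
  have heq : ((List.range L).map fun k => w.getD (p + k - 1) false) = (w.drop (p - 1)).take L := by
    refine List.ext_getElem (by simp; omega) fun k h₁ h₂ => ?_
    simp only [List.getElem_map, List.getElem_range, List.getElem_take, List.getElem_drop]
    rw [List.getD_eq_getElem _ _ (by simp at h₁; omega)]
    congr 1
    omega
  rw [heq]
  exact (List.take_prefix _ _).isInfix.trans (List.drop_suffix _ _).isInfix

theorem map_mem_Fac1 (μ : ℕ → Bool) {p : ℕ} (hp : 1 ≤ p) (L : ℕ) :
    ((List.range L).map fun k => μ (p + k)) ∈ Fac1 μ :=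
  ⟨p - 1, by simp [Nat.sub_add_cancel hp]⟩

theorem stmt14 (μ : ℕ → Bool) (hrec : Recurrent1 μ) :
    (∀ X : Set (List Bool),
      (∀ v u : List Bool, u ∈ X → v <:+: u → v ∈ X) →
      (∀ S : Finset ℕ, ∃ w ∈ X, Nonempty ((Gmu μ).induce (↑S : Set ℕ) ↪g GW w)) →
      Fac1 μ ⊆ X) ∧
    (∀ μ' : ℕ → Bool,
      (∀ S : Finset ℕ, Nonempty ((Gmu μ).induce (↑S : Set ℕ) ↪g Gmu μ')) →
      Fac1 μ ⊆ Fac1 μ') := by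
  refine ⟨fun X hX hEmb v hv => ?_, fun μ' hEmb v hv => ?_⟩
  · obtain ⟨a, m, hwindow⟩ := hrec.exists_window hv
    obtain ⟨w, hw, ⟨F⟩⟩ := hEmb (Icc a (a + m))
    obtain ⟨f, hf, hrange⟩ := exists_isWordEmbedding (ω := fun y => w.getD (y - 1) false)
      Fin.val Fin.val_injective (fun _ _ => Iff.rfl) F
    obtain ⟨p, hp, hpv, hv'⟩ := hwindow _ f w.length hf fun j hj => by
      obtain ⟨x, hx⟩ := hrange j hj
      exact hx ▸ Nat.lt_succ_iff.1 x.isLt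
    rw [hv']
    exact hX _ w hw (infix_map_getD hp (by omega))
  · obtain ⟨a, m, hwindow⟩ := hrec.exists_window hv
    obtain ⟨F⟩ := hEmb (Icc a (a + m))
    obtain ⟨f, hf, -⟩ := exists_isWordEmbedding id Function.injective_id (fun _ _ => Iff.rfl) F
    obtain ⟨p, hp, -, hv'⟩ := hwindow μ' f _ hf fun j hj =>
      le_sup (f := f) (mem_range.2 (Nat.lt_succ_of_le hj))
    rw [hv']
    exact map_mem_Fac1 μ' hp _
end

section
/- Let μ : {1,2,3,…} → {0,1} be a recurrent 0-1 word and let w = w₁…wₙ be a finite 0-1 word with n ≥ 1. If the word w₂…wₙ (w with its first letter deleted) is a factor of μ, then the graph G_w admits an induced embedding into G_μ. -/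
/-! Vertices `1, …, n` of `G_w` go to consecutive vertices `q, …, q + n - 1` of `G_μ`, where
`w₂ … wₙ` occurs in `μ` at positions `q + 1, …, q + n - 1`: adjacency between an earlier vertex
and a later one depends only on the letter of the later vertex and on whether the two are
consecutive, so these pairs match. The letter `w₁` plays no role there; it is accounted for by
sending vertex `0` to some `x < q` that is adjacent to `q` exactly when `w₁ = 1`, which exists
once `q ≥ 2` (take `q - 1` or `q - 2`); recurrence provides an occurrence that far out. -/

def SimpleGraph.Embedding.ofStrictMono {α β : Type*} [LinearOrder α] [Preorder β]
    {G : SimpleGraph α} {H : SimpleGraph β} (f : α → β) (hf : StrictMono f)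
    (hadj : ∀ a b, a < b → (H.Adj (f a) (f b) ↔ G.Adj a b)) : G ↪g H where
  toFun := f
  inj' := hf.injective
  map_rel_iff' {a b} := by
    change H.Adj (f a) (f b) ↔ G.Adj a b
    rcases lt_trichotomy a b with hab | rfl | hab
    · exact hadj a b hab
    · simp
    · simpa only [SimpleGraph.adj_comm] using hadj b a hab

theorem Gmu.adj_iff_of_lt_s15 (μ : ℕ → Bool) {u v : ℕ} (h : u < v) :
    (Gmu μ).Adj u v ↔ (μ v = true ↔ v = u + 1) := by
  change GmuAdj μ u v ↔ _
  simp only [GmuAdj, h, true_and, h.not_gt, false_and, or_false]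
  cases μ v <;> simp

theorem GW.adj_iff_of_lt_s15 (w : List Bool) {a b : Fin (w.length + 1)} (h : a < b) :
    (GW w).Adj a b ↔ (w.getD (b - 1) false = true ↔ (b : ℕ) = a + 1) := by
  change GWAdj w a b ↔ _
  have h' : (a : ℕ) < b := h
  simp only [GWAdj, h', true_and, h'.not_gt, false_and, or_false]
  cases w.getD (b - 1) false <;> simp

theorem Gmu.exists_lt_adj_iff (μ : ℕ → Bool) {q : ℕ} (hq : 2 ≤ q) (P : Prop) :
    ∃ x < q, ((Gmu μ).Adj x q ↔ P) := by
  obtain ⟨r, rfl⟩ : ∃ r, q = r + 2 := ⟨q - 2, by omega⟩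
  by_cases hP : μ (r + 2) = true ↔ P
  · exact ⟨r + 1, by omega, by simpa [adj_iff_of_lt_s15 μ (show r + 1 < r + 2 by omega)] using hP⟩
  · refine ⟨r, by omega, ?_⟩
    have hne : r + 2 ≠ r + 1 := by omega
    simp only [adj_iff_of_lt_s15 μ (show r < r + 2 by omega), hne, iff_false]
    tauto

theorem List.getD_eq_of_eq_map_range {α : Type*} {v : List α} {f : ℕ → α}
    (h : v = (List.range v.length).map f) {k : ℕ} (hk : k < v.length) (d : α) :
    v.getD k d = f k := by
  conv_lhs => rw [h]
  simp [hk]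

theorem Gmu.nonempty_embedding_of_occurrence (μ : ℕ → Bool) (w : List Bool) {x q : ℕ}
    (hxq : x < q) (hx : (Gmu μ).Adj x q ↔ w.getD 0 false = true)
    (hletters : ∀ k, k + 1 < w.length → μ (q + (k + 1)) = w.getD (k + 1) false) :
    Nonempty (GW w ↪g Gmu μ) := by
  let f : Fin (w.length + 1) → ℕ := Fin.cons x fun j => q + j
  have hf : StrictMono f := Fin.strictMono_cons.2
    ⟨fun j => by omega, fun i j hij => by simpa using hij⟩
  refine ⟨.ofStrictMono f hf fun a b hab => ?_⟩
  rw [GW.adj_iff_of_lt_s15 w hab]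
  induction b using Fin.cases with
  | zero => exact absurd hab (Fin.not_lt_zero a)
  | succ j =>
  induction a using Fin.cases with
  | zero =>
    simp only [f, Fin.cons_zero, Fin.cons_succ, Fin.val_succ, Fin.val_zero]
    obtain ⟨_ | k, hk⟩ := j
    · simpa using hx
    · have hne : q + (k + 1) ≠ x + 1 := by omega
      simp [Gmu.adj_iff_of_lt_s15 μ (show x < q + (k + 1) by omega), hletters k hk, hne]
  | succ i =>
    simp only [f, Fin.cons_succ, Fin.val_succ]
    obtain ⟨_ | k, hk⟩ := j
    · exact absurd (Fin.succ_lt_succ_iff.mp hab : (i : ℕ) < 0) (Nat.not_lt_zero _)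
    · have hij : (i : ℕ) < k + 1 := Fin.succ_lt_succ_iff.mp hab
      simp [Gmu.adj_iff_of_lt_s15 μ (show q + i < q + (k + 1) by omega), hletters k hk]
      omega

theorem stmt15_general (μ : ℕ → Bool) (hrec : Recurrent1 μ) (w : List Bool)
    (htail : w.tail ∈ Fac1 μ) :
    Nonempty (GW w ↪g Gmu μ) := by
  obtain ⟨q, hq, hocc⟩ := hrec w.tail htail 2
  have hletters : ∀ k, k + 1 < w.length → μ (q + (k + 1)) = w.getD (k + 1) false := by
    intro k hk
    have hk' : k < w.tail.length := by rw [List.length_tail]; omega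
    rw [← add_assoc, add_right_comm, ← List.getD_eq_of_eq_map_range hocc hk' false]
    cases w <;> simp
  obtain ⟨x, hxq, hx⟩ := Gmu.exists_lt_adj_iff μ hq (w.getD 0 false = true)
  exact Gmu.nonempty_embedding_of_occurrence μ w hxq hx hletters

theorem stmt15 (μ : ℕ → Bool) (hrec : Recurrent1 μ) (w : List Bool) (hw : w ≠ [])
    (htail : w.tail ∈ Fac1 μ) :
    Nonempty (GW w ↪g Gmu μ) :=
  stmt15_general μ hrec w htail
end

section
/- Let w = w₁…wₙ be a finite 0-1 word (n ≥ 1) and let G_w be the associated graph on {0,1,…,n}. If M is a nontrivial module of G_w (i.e., a module that is neither empty, nor a singleton, nor the whole vertex set), then M is one of the following four sets: {1,…,n}, or {0} ∪ {2,3,…,n}, or {0,n}, or {1,n}. -/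
theorem GW_adj_iff_of_lt {w : List Bool} {x y : Fin (w.length + 1)} (h : x < y) :
    (GW w).Adj x y ↔ (w.getD (y - 1) false = true ↔ (y : ℕ) = x + 1) := by
  change GWAdj w x y ↔ _
  unfold GWAdj
  cases w.getD (y - 1) false <;> simp [Fin.lt_def.mp h, not_lt.mpr (Fin.le_def.mp h.le)]

theorem IsModule.adj_iff_adj_s19 {V : Type*} {G : SimpleGraph V} {M : Set V} (hM : IsModule G M)
    {x p q : V} (hx : x ∉ M) (hp : p ∈ M) (hq : q ∈ M) : G.Adj x p ↔ G.Adj x q := by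
  rcases hM x hx with h | h
  · exact iff_of_true (h p hp) (h q hq)
  · exact iff_of_false (h p hp) (h q hq)

section GW

variable {w : List Bool} {M : Set (Fin (w.length + 1))}

theorem IsModule.GW_mem_of_val_eq_succ (hM : IsModule (GW w) M) {a y z : Fin (w.length + 1)}
    (ha : a ∈ M) (hy : y ∈ M) (hay : a < y) (hz : (z : ℕ) = y + 1) : z ∈ M := by
  by_contra hzM
  have h := hM.adj_iff_adj_s19 hzM ha hy
  rw [(GW w).adj_comm, (GW w).adj_comm z, GW_adj_iff_of_lt (by omega),
    GW_adj_iff_of_lt (by omega)] at h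
  grind

theorem IsModule.GW_mem_of_le (hM : IsModule (GW w) M) {a b y : Fin (w.length + 1)}
    (ha : a ∈ M) (hb : b ∈ M) (hab : a < b) (hby : b ≤ y) : y ∈ M := by
  suffices ∀ k, (b : ℕ) ≤ k → ∀ hk : k < w.length + 1, (⟨k, hk⟩ : Fin (w.length + 1)) ∈ M from
    this y hby y.isLt
  refine Nat.le_induction (fun _ => hb) fun k hbk ih hk => ?_
  exact hM.GW_mem_of_val_eq_succ ha (ih (by omega)) (by simp only [Fin.lt_def]; omega) rfl

theorem IsModule.GW_mem_of_lt_pred (hM : IsModule (GW w) M) {p q x y : Fin (w.length + 1)}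
    (hp : p ∈ M) (hq : q ∈ M) (hpq : p < q) (hx : x ∉ M) (hxp : (x : ℕ) + 1 = p) (hyx : y < x) :
    y ∈ M := by
  by_contra hyM
  have hx' := hM.adj_iff_adj_s19 hx hp hq
  have hy' := hM.adj_iff_adj_s19 hyM hp hq
  rw [GW_adj_iff_of_lt (by omega), GW_adj_iff_of_lt (by omega)] at hx' hy'
  grind

theorem IsModule.GW_exists_eq_insert_Ici (hM : IsModule (GW w) M) (hnt : M.Nontrivial) :
    ∃ a b, a < b ∧ M = insert a (Set.Ici b) := by
  obtain ⟨a, haM, ha⟩ := Set.exists_min_image M id M.toFinite hnt.nonempty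
  obtain ⟨c, hcM, hca⟩ := hnt.exists_ne a
  obtain ⟨b, ⟨hbM, hba⟩, hb⟩ :=
    Set.exists_min_image (M \ {a}) id (M \ {a}).toFinite ⟨c, hcM, hca⟩
  have hab : a < b := lt_of_le_of_ne (ha b hbM) (Ne.symm hba)
  refine ⟨a, b, hab, Set.Subset.antisymm (fun y hy => ?_) ?_⟩
  · by_cases hya : y = a
    · exact .inl hya
    · exact .inr (hb y ⟨hy, hya⟩)
  · exact Set.insert_subset haM fun y hby => hM.GW_mem_of_le haM hbM hab hby

variable {a b : Fin (w.length + 1)}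

theorem IsModule.GW_val_le_one (hM : IsModule (GW w) (insert a (Set.Ici b))) (hab : a < b) :
    (a : ℕ) ≤ 1 := by
  by_contra! h
  obtain ⟨x, hx⟩ : ∃ x : Fin (w.length + 1), (x : ℕ) = a - 1 := ⟨⟨a - 1, by omega⟩, rfl⟩
  obtain ⟨y, hy⟩ : ∃ y : Fin (w.length + 1), (y : ℕ) = a - 2 := ⟨⟨a - 2, by omega⟩, rfl⟩
  have hxM : x ∉ insert a (Set.Ici b) := by
    simp only [Set.mem_insert_iff, Set.mem_Ici, Fin.ext_iff, Fin.le_def]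
    omega
  have hyM := hM.GW_mem_of_lt_pred (Set.mem_insert a _)
    (Set.mem_insert_of_mem a Set.self_mem_Ici) hab hxM (by omega) (y := y) (by omega)
  simp only [Set.mem_insert_iff, Set.mem_Ici, Fin.ext_iff, Fin.le_def] at hyM
  omega

theorem IsModule.GW_val_eq_length (hM : IsModule (GW w) (insert a (Set.Ici b))) (hab : a < b)
    (hb : 3 ≤ (b : ℕ)) : (b : ℕ) = w.length := by
  have ha := hM.GW_val_le_one hab
  by_contra! h
  obtain ⟨c, hc⟩ : ∃ c : Fin (w.length + 1), (c : ℕ) = b + 1 := ⟨⟨b + 1, by omega⟩, rfl⟩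
  obtain ⟨x, hx⟩ : ∃ x : Fin (w.length + 1), (x : ℕ) = b - 1 := ⟨⟨b - 1, by omega⟩, rfl⟩
  obtain ⟨y, hy⟩ : ∃ y : Fin (w.length + 1), (y : ℕ) = 1 - a := ⟨⟨1 - a, by omega⟩, rfl⟩
  have hcM : c ∈ insert a (Set.Ici b) := Set.mem_insert_of_mem a (show b ≤ c by omega)
  have hxM : x ∉ insert a (Set.Ici b) := by
    simp only [Set.mem_insert_iff, Set.mem_Ici, Fin.ext_iff, Fin.le_def]
    omega
  have hyM := hM.GW_mem_of_lt_pred (Set.mem_insert_of_mem a Set.self_mem_Ici) hcM (by omega)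
    hxM (by omega) (y := y) (by omega)
  simp only [Set.mem_insert_iff, Set.mem_Ici, Fin.ext_iff, Fin.le_def] at hyM
  omega

end GW

theorem stmt19_general (w : List Bool) (M : Set (Fin (w.length + 1)))
    (hmod : IsModule (GW w) M)
    (hne : M ≠ ∅) (hns : ¬ ∃ a, M = {a}) (hnu : M ≠ Set.univ) :
    M = {x : Fin (w.length + 1) | (x : ℕ) ≠ 0} ∨
    M = {x : Fin (w.length + 1) | (x : ℕ) = 0 ∨ 2 ≤ (x : ℕ)} ∨
    M = {x : Fin (w.length + 1) | (x : ℕ) = 0 ∨ (x : ℕ) = w.length} ∨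
    M = {x : Fin (w.length + 1) | (x : ℕ) = 1 ∨ (x : ℕ) = w.length} := by
  have hnt : M.Nontrivial :=
    ((Set.nonempty_iff_ne_empty.mpr hne).exists_eq_singleton_or_nontrivial).resolve_left hns
  obtain ⟨a, b, hab, rfl⟩ := hmod.GW_exists_eq_insert_Ici hnt
  have ha := hmod.GW_val_le_one hab
  have hb := hmod.GW_val_eq_length hab
  have hab' : ¬((a : ℕ) = 0 ∧ (b : ℕ) = 1) := by
    rintro ⟨ha0, hb1⟩
    refine hnu (Set.eq_univ_of_forall fun y => ?_)
    simp only [Set.mem_insert_iff, Set.mem_Ici, Fin.ext_iff, Fin.le_def]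
    omega
  have hcases : ((a : ℕ) = 1 ∧ (b : ℕ) = 2) ∨ ((a : ℕ) = 0 ∧ (b : ℕ) = 2) ∨
      ((a : ℕ) = 0 ∧ (b : ℕ) = w.length) ∨ ((a : ℕ) = 1 ∧ (b : ℕ) = w.length) := by
    have := Fin.lt_def.mp hab
    omega
  refine hcases.imp ?_ (Or.imp ?_ (Or.imp ?_ ?_)) <;> rintro ⟨ha, hb⟩ <;> ext y <;>
    simp only [Set.mem_insert_iff, Set.mem_Ici, Set.mem_ofPred_eq, Fin.ext_iff, Fin.le_def] <;>
    omega

theorem stmt19 (w : List Bool) (hw : w ≠ []) (M : Set (Fin (w.length + 1)))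
    (hmod : IsModule (GW w) M)
    (hne : M ≠ ∅) (hns : ¬ ∃ a, M = {a}) (hnu : M ≠ Set.univ) :
    M = {x : Fin (w.length + 1) | (x : ℕ) ≠ 0} ∨
    M = {x : Fin (w.length + 1) | (x : ℕ) = 0 ∨ 2 ≤ (x : ℕ)} ∨
    M = {x : Fin (w.length + 1) | (x : ℕ) = 0 ∨ (x : ℕ) = w.length} ∨
    M = {x : Fin (w.length + 1) | (x : ℕ) = 1 ∨ (x : ℕ) = w.length} :=
  stmt19_general w M hmod hne hns hnu
end
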